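/- arXiv:1506.07342 — 5 statements merged into one kernel-verified Lean document; each statement's English description precedes it below -/
import Mathlib

section
/- If the set V_g of integrable solutions of the inhomogeneous refinement equation is nonempty, then ĝ(0) = 0, i.e. ∫_ℝ g(t) dt = 0. -/
open MeasureTheory Filter Topology

/-- Change of variables for affine maps: integrability. -/
lemma aux_integrable_affine {f : ℝ → ℝ} (hf : Integrable f) {a : ℝ} (ha : a ≠ 0) (b : ℝ) :
    Integrable (fun x => f (a * x - b)) := by
  have h1 : Integrable (fun y => f (y - b)) := hf.comp_sub_right b
  exact h1.comp_mul_left' ha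

/-- Change of variables for affine maps: value of the integral. -/
lemma aux_integral_affine (f : ℝ → ℝ) {a : ℝ} (ha : a ≠ 0) (b : ℝ) :
    ∫ x : ℝ, f (a * x - b) = |a⁻¹| * ∫ t, f t := by
  have h1 : (∫ x : ℝ, (fun y => f (y - b)) (a * x)) = |a⁻¹| • ∫ y : ℝ, f (y - b) :=
    MeasureTheory.Measure.integral_comp_mul_left (fun y => f (y - b)) a
  simpa [integral_sub_right_eq_self f b, smul_eq_mul] using h1

/-- If the inhomogeneous refinement equation has an integrable
solution (i.e. `V_g ≠ ∅`), then `ĝ(0) = ∫ g = 0`. -/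
theorem integral_eq_zero_of_solution_exists
    {Ω : Type*} [MeasurableSpace Ω] (P : Measure Ω) [IsProbabilityMeasure P]
    (L M : Ω → ℝ) (hL : Measurable L) (hM : Measurable M)
    (hL0 : P {ω | L ω = 0} = 0)
    (g : ℝ → ℝ) (hg : Integrable g)
    (hex : ∃ f : ℝ → ℝ, Integrable f ∧
      ∀ᵐ x : ℝ ∂volume,
        f x = (∫ ω, |L ω| * f (L ω * x - M ω) ∂P) + g x) :
    ∫ t : ℝ, g t = 0 := by
  obtain ⟨f, hf, heq⟩ := hex
  -- a.e. nonvanishing of L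
  have hLne : ∀ᵐ ω ∂P, L ω ≠ 0 := by
    rw [ae_iff]
    simpa using hL0
  -- replace f by a strongly measurable representative f'
  set f' : ℝ → ℝ := hf.1.mk f with hf'def
  have hf'sm : StronglyMeasurable f' := hf.1.stronglyMeasurable_mk
  have hf'meas : Measurable f' := hf'sm.measurable
  have hff' : f =ᵐ[volume] f' := hf.1.ae_eq_mk
  have hf' : Integrable f' := hf.congr hff'
  -- a measurable null superset of the difference set
  set N : Set ℝ := toMeasurable volume {t | f t ≠ f' t} with hNdef
  have hNmeas : MeasurableSet N := measurableSet_toMeasurable _ _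
  have hNnull : volume N = 0 := by
    rw [hNdef, measure_toMeasurable]
    exact ae_iff.mp hff'
  have hNsub : {t | f t ≠ f' t} ⊆ N := subset_toMeasurable _ _
  -- the "bad" set in the product space is null
  set S : Set (Ω × ℝ) := {p | L p.1 * p.2 - M p.1 ∈ N} with hSdef
  have hSmeas : MeasurableSet S :=
    (((hL.comp measurable_fst).mul measurable_snd).sub (hM.comp measurable_fst)) hNmeas
  have hSnull : (P.prod volume) S = 0 := by
    rw [Measure.measure_prod_null hSmeas]
    filter_upwards [hLne] with ω hω
    have : Prod.mk ω ⁻¹' S = (fun x => L ω * x) ⁻¹' ((fun y => y - M ω) ⁻¹' N) := by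
      ext x; simp [hSdef, Set.mem_preimage]
    rw [this]
    have h1 : volume ((fun y => y - M ω) ⁻¹' N) = 0 := by
      rw [show (fun y => y - M ω) ⁻¹' N = (fun y => y + -(M ω)) ⁻¹' N by
        ext y; simp [sub_eq_add_neg]]
      rw [measure_preimage_add_right volume (-(M ω)) N]
      exact hNnull
    calc volume ((fun x => L ω * x) ⁻¹' ((fun y => y - M ω) ⁻¹' N))
        = ENNReal.ofReal |(L ω)⁻¹| * volume ((fun y => y - M ω) ⁻¹' N) := by
          exact Real.volume_preimage_mul_left hω _
      _ = 0 := by rw [h1, mul_zero]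
  -- swap to get: for a.e. x, for a.e. ω the argument avoids N
  have hSnull' : (volume.prod P) (Prod.swap ⁻¹' S) = 0 := by
    have hmp : MeasurePreserving (Prod.swap : ℝ × Ω → Ω × ℝ) (volume.prod P) (P.prod volume) :=
      Measure.measurePreserving_swap
    rw [← hmp.measure_preimage hSmeas.nullMeasurableSet] at hSnull
    exact hSnull
  have hae : ∀ᵐ x : ℝ ∂volume, ∀ᵐ ω ∂P, L ω * x - M ω ∉ N := by
    have h := (Measure.measure_prod_null (measurable_swap hSmeas)).mp hSnull'
    filter_upwards [h] with x hx
    rw [ae_iff]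
    have : {ω | ¬ L ω * x - M ω ∉ N} = Prod.mk x ⁻¹' (Prod.swap ⁻¹' S) := by
      ext ω; simp [hSdef]
    rw [this]
    exact hx
  -- the refinement equation for f'
  have heq' : ∀ᵐ x : ℝ ∂volume,
      f' x = (∫ ω, |L ω| * f' (L ω * x - M ω) ∂P) + g x := by
    filter_upwards [heq, hff', hae] with x hx hfx hNx
    rw [← hfx, hx]
    congr 1
    refine integral_congr_ae ?_
    filter_upwards [hNx] with ω hω
    have : f (L ω * x - M ω) = f' (L ω * x - M ω) := by
      by_contra h
      exact hω (hNsub h)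
    rw [this]
  -- the kernel function on the product space
  set F : Ω × ℝ → ℝ := fun p => |L p.1| * f' (L p.1 * p.2 - M p.1) with hFdef
  have hFmeas : AEStronglyMeasurable F (P.prod volume) := by
    refine Measurable.aestronglyMeasurable ?_
    exact ((hL.comp measurable_fst).abs.mul (hf'meas.comp
      (((hL.comp measurable_fst).mul measurable_snd).sub (hM.comp measurable_fst))))
  have hnorm : ∀ ω : Ω, L ω ≠ 0 →
      (∫ x : ℝ, ‖F (ω, x)‖) = ∫ t, ‖f' t‖ := by
    intro ω hω
    have h1 : ∀ x : ℝ, ‖F (ω, x)‖ = |L ω| * ‖f' (L ω * x - M ω)‖ := by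
      intro x
      simp [hFdef, abs_mul, Real.norm_eq_abs, abs_abs]
    simp_rw [h1]
    rw [integral_const_mul]
    rw [aux_integral_affine (fun t => ‖f' t‖) hω (M ω)]
    rw [← mul_assoc, abs_inv, mul_inv_cancel₀ (abs_ne_zero.mpr hω), one_mul]
  have hFint : Integrable F (P.prod volume) := by
    rw [integrable_prod_iff hFmeas]
    constructor
    · filter_upwards [hLne] with ω hω
      exact ((aux_integrable_affine hf' hω (M ω)).const_mul |L ω|)
    · have : (fun ω => ∫ x : ℝ, ‖F (ω, x)‖) =ᵐ[P] fun _ => ∫ t, ‖f' t‖ := by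
        filter_upwards [hLne] with ω hω
        exact hnorm ω hω
      exact (integrable_const (∫ t, ‖f' t‖)).congr this.symm
  -- Fubini: the integral of the kernel term equals ∫ f'
  have hswap : (∫ x : ℝ, ∫ ω, F (ω, x) ∂P) = ∫ ω, (∫ x : ℝ, F (ω, x)) ∂P := by
    exact (integral_integral_swap (f := fun ω x => F (ω, x)) hFint).symm
  have hinner : ∀ ω : Ω, L ω ≠ 0 → (∫ x : ℝ, F (ω, x)) = ∫ t, f' t := by
    intro ω hω
    have : (∫ x : ℝ, F (ω, x)) = |L ω| * ∫ x : ℝ, f' (L ω * x - M ω) := by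
      simp only [hFdef]
      exact integral_const_mul _ _
    rw [this, aux_integral_affine f' hω (M ω), ← mul_assoc, abs_inv,
      mul_inv_cancel₀ (abs_ne_zero.mpr hω), one_mul]
  have hker : (∫ x : ℝ, ∫ ω, F (ω, x) ∂P) = ∫ t, f' t := by
    rw [hswap]
    have : (fun ω => ∫ x : ℝ, F (ω, x)) =ᵐ[P] fun _ => ∫ t, f' t := by
      filter_upwards [hLne] with ω hω
      exact hinner ω hω
    rw [integral_congr_ae this]
    simp
  -- the kernel marginal is integrable
  have hh : Integrable (fun x : ℝ => ∫ ω, F (ω, x) ∂P) volume :=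
    hFint.swap.integral_prod_left
  -- conclude
  have hsplit : ∫ x : ℝ, f' x = (∫ x : ℝ, ∫ ω, F (ω, x) ∂P) + ∫ t, g t := by
    rw [← integral_add hh hg]
    exact integral_congr_ae heq'
  rw [hker] at hsplit
  linarith
end

section
/- (Lemma 2.2) For f ∈ L¹(ℝ), f belongs to V_g if and only if f̂(x) = I_{f,N}(x) + Σ_{n=1}^{N−1} I_{g,n}(x) + ĝ(x) for every N ∈ ℕ (N ≥ 1) and every x ∈ ℝ, with the convention that the empty sum Σ_{n=1}^{0} I_{g,n}(x) equals 0. -/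
open MeasureTheory Filter Topology

/-- The Fourier transform `f̂(x) = ∫_ℝ e^{itx} f(t) dt` of an integrable function. -/
noncomputable def fourierTr (f : ℝ → ℝ) (x : ℝ) : ℂ :=
  ∫ t : ℝ, Complex.exp (Complex.I * t * x) * (f t : ℂ)

/-- `I_{h,n}(x) = ∫_{Ω^∞} exp{i x Σ_{k=1}^n M_k/(L₁⋯L_k)} ĥ(x/(L₁⋯L_n)) P^∞(dϖ)`,
with points of `Ω^∞` written as sequences `ϖ : ℕ → Ω` (so `L_k(ϖ) = L (ϖ (k-1))`). -/
noncomputable def Ifun {Ω : Type*} [MeasurableSpace Ω] (Pinf : Measure (ℕ → Ω))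
    (L M : Ω → ℝ) (h : ℝ → ℝ) (n : ℕ) (x : ℝ) : ℂ :=
  ∫ ϖ, Complex.exp (Complex.I * x *
      ((∑ k ∈ Finset.range n, M (ϖ k) / ∏ j ∈ Finset.range (k + 1), L (ϖ j) : ℝ) : ℂ)) *
    fourierTr h (x / ∏ j ∈ Finset.range n, L (ϖ j)) ∂Pinf

namespace VgAux

open Complex Real
open scoped FourierTransform

lemma norm_exp_I_mul (a b : ℝ) : ‖Complex.exp (Complex.I * a * b)‖ = 1 := by
  rw [Complex.norm_exp]
  simp [Complex.mul_re]

lemma integrable_kernel {f : ℝ → ℝ} (hf : Integrable f) (x : ℝ) :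
    Integrable (fun t : ℝ => Complex.exp (Complex.I * t * x) * (f t : ℂ)) := by
  refine Integrable.bdd_mul hf.ofReal ?_ (Eventually.of_forall fun t => le_of_eq (norm_exp_I_mul t x))
  exact (Complex.continuous_exp.comp (by fun_prop)).aestronglyMeasurable

lemma fourierTr_congr {f f' : ℝ → ℝ} (h : f =ᵐ[volume] f') : fourierTr f = fourierTr f' := by
  funext x
  refine integral_congr_ae ?_
  filter_upwards [h] with t ht using by rw [ht]

lemma fourierTr_add {f g : ℝ → ℝ} (hf : Integrable f) (hg : Integrable g) (x : ℝ) :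
    fourierTr (fun t => f t + g t) x = fourierTr f x + fourierTr g x := by
  unfold fourierTr
  rw [← integral_add (integrable_kernel hf x) (integrable_kernel hg x)]
  congr 1; funext t; push_cast; ring

lemma fourierTr_sub {f g : ℝ → ℝ} (hf : Integrable f) (hg : Integrable g) (x : ℝ) :
    fourierTr (fun t => f t - g t) x = fourierTr f x - fourierTr g x := by
  unfold fourierTr
  rw [← integral_sub (integrable_kernel hf x) (integrable_kernel hg x)]
  congr 1; funext t; push_cast; ring

lemma norm_fourierTr_le (f : ℝ → ℝ) (x : ℝ) : ‖fourierTr f x‖ ≤ ∫ t, ‖f t‖ := by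
  refine (norm_integral_le_integral_norm _).trans (le_of_eq ?_)
  congr 1; funext t
  rw [norm_mul, norm_exp_I_mul, one_mul, Complex.norm_real]

lemma fourierTr_eq_fourierIntegral (f : ℝ → ℝ) (x : ℝ) :
    fourierTr f x = 𝓕 (fun t : ℝ => (f t : ℂ)) (-x / (2 * π)) := by
  rw [Real.fourier_real_eq_integral_exp_smul]
  unfold fourierTr
  congr 1; funext t
  have : ((-2 : ℝ) * π * t * (-x / (2 * π)) : ℝ) = t * x := by
    field_simp
  rw [this, smul_eq_mul]
  congr 1
  push_cast
  ring

lemma continuous_fourierTr {f : ℝ → ℝ} (hf : Integrable f) : Continuous (fourierTr f) := by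
  have h1 : Continuous (𝓕 (fun t : ℝ => (f t : ℂ))) := by
    exact VectorFourier.fourierIntegral_continuous Real.continuous_fourierChar
      (by exact continuous_inner) hf.ofReal
  have : fourierTr f = fun x => 𝓕 (fun t : ℝ => (f t : ℂ)) (-x / (2 * π)) := by
    funext x; exact fourierTr_eq_fourierIntegral f x
  rw [this]
  fun_prop

lemma fourierTr_affine {f : ℝ → ℝ} (hf : Integrable f) {a : ℝ} (ha : a ≠ 0) (b y : ℝ) :
    fourierTr (fun t => |a| * f (a * t - b)) y
      = Complex.exp (Complex.I * y * ((b / a : ℝ) : ℂ)) * fourierTr f (y / a) := by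
  have haC : (a : ℂ) ≠ 0 := Complex.ofReal_ne_zero.2 ha
  set ψ : ℝ → ℂ := fun u => Complex.exp (Complex.I * ((u + b) / a) * y) * (f u : ℂ) with hψ
  have key : ∀ t : ℝ, Complex.exp (Complex.I * t * y) * ((|a| * f (a * t - b) : ℝ) : ℂ)
      = ((|a| : ℝ) : ℂ) * ψ (a * t - b) := by
    intro t
    rw [hψ]
    simp only
    rw [show ((a * t - b : ℝ) : ℂ) + (b : ℂ) = (a : ℂ) * t by push_cast; ring,
      mul_div_cancel_left₀ _ haC]
    push_cast
    ring
  calc fourierTr (fun t => |a| * f (a * t - b)) y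
      = ∫ t : ℝ, ((|a| : ℝ) : ℂ) * ψ (a * t - b) := by
        unfold fourierTr; exact integral_congr_ae (Eventually.of_forall key)
    _ = ((|a| : ℝ) : ℂ) * ∫ t : ℝ, ψ (a * t - b) := integral_const_mul _ _
    _ = ((|a| : ℝ) : ℂ) * (|a⁻¹| • ∫ u : ℝ, ψ (u - b)) := by
        rw [← MeasureTheory.Measure.integral_comp_mul_left (fun u => ψ (u - b)) a]
    _ = ((|a| : ℝ) : ℂ) * (|a⁻¹| • ∫ u : ℝ, ψ u) := by rw [integral_sub_right_eq_self ψ b]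
    _ = ∫ u : ℝ, ψ u := by
        rw [Complex.real_smul, ← mul_assoc, ← Complex.ofReal_mul, abs_inv,
          mul_inv_cancel₀ (abs_ne_zero.2 ha)]
        simp
    _ = Complex.exp (Complex.I * y * ((b / a : ℝ) : ℂ)) * fourierTr f (y / a) := by
        unfold fourierTr
        rw [← integral_const_mul]
        refine integral_congr_ae (Eventually.of_forall fun u => ?_)
        rw [hψ]
        simp only
        rw [← mul_assoc, ← Complex.exp_add]
        congr 1
        push_cast
        ring


section Tsection

variable {Ω : Type*} [MeasurableSpace Ω]

/-- The operator `T`. -/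
noncomputable def Tmap (P : Measure Ω) (L M : Ω → ℝ) (f : ℝ → ℝ) : ℝ → ℝ :=
  fun x => ∫ ω, |L ω| * f (L ω * x - M ω) ∂P

variable {P : Measure Ω} [IsProbabilityMeasure P] {L M : Ω → ℝ}

lemma aeL (hL0 : P {ω | L ω = 0} = 0) : ∀ᵐ ω ∂P, L ω ≠ 0 := by
  rw [ae_iff]
  simpa using hL0

lemma measurable_Tker (hL : Measurable L) (hM : Measurable M) {f : ℝ → ℝ}
    (hfm : Measurable f) :
    Measurable (fun p : Ω × ℝ => |L p.1| * f (L p.1 * p.2 - M p.1)) :=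
  ((hL.comp measurable_fst).abs).mul
    (hfm.comp (((hL.comp measurable_fst).mul measurable_snd).sub (hM.comp measurable_fst)))

lemma integrable_slice {f : ℝ → ℝ} (hf : Integrable f) {a : ℝ} (ha : a ≠ 0) (b : ℝ) :
    Integrable (fun x => |a| * f (a * x - b)) := by
  have h1 : Integrable (fun y : ℝ => f (y - b)) := hf.comp_sub_right b
  exact (h1.comp_mul_left' ha).const_mul _

lemma integral_norm_slice (f : ℝ → ℝ) {a : ℝ} (ha : a ≠ 0) (b : ℝ) :
    ∫ x : ℝ, ‖|a| * f (a * x - b)‖ = ∫ t, ‖f t‖ := by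
  have h : ∀ x : ℝ, ‖|a| * f (a * x - b)‖ = |a| • ‖f (a * x - b)‖ := by
    intro x
    rw [smul_eq_mul, norm_mul, norm_abs_eq_norm, Real.norm_eq_abs]
  calc ∫ x : ℝ, ‖|a| * f (a * x - b)‖ = |a| • ∫ x : ℝ, ‖f (a * x - b)‖ := by
        rw [← integral_smul]; exact integral_congr_ae (Eventually.of_forall h)
    _ = |a| • (|a⁻¹| • ∫ y : ℝ, ‖f (y - b)‖) := by
        rw [← MeasureTheory.Measure.integral_comp_mul_left (fun y => ‖f (y - b)‖) a]
    _ = |a| • (|a⁻¹| • ∫ t : ℝ, ‖f t‖) := by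
        rw [integral_sub_right_eq_self (fun t => ‖f t‖) b]
    _ = ∫ t, ‖f t‖ := by
        rw [smul_smul, abs_inv, mul_inv_cancel₀ (abs_ne_zero.2 ha), one_smul]

lemma integrable_Tker (hL : Measurable L) (hM : Measurable M) (hL0 : P {ω | L ω = 0} = 0)
    {f : ℝ → ℝ} (hfm : Measurable f) (hf : Integrable f) :
    Integrable (fun p : Ω × ℝ => |L p.1| * f (L p.1 * p.2 - M p.1)) (P.prod volume) := by
  rw [integrable_prod_iff (measurable_Tker hL hM hfm).aestronglyMeasurable]
  constructor
  · filter_upwards [aeL hL0] with ω hω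
    exact integrable_slice hf hω (M ω)
  · refine (integrable_const (∫ t, ‖f t‖)).congr ?_
    filter_upwards [aeL hL0] with ω hω
    exact (integral_norm_slice f hω (M ω)).symm

lemma integrable_Tmap (hL : Measurable L) (hM : Measurable M) (hL0 : P {ω | L ω = 0} = 0)
    {f : ℝ → ℝ} (hfm : Measurable f) (hf : Integrable f) :
    Integrable (Tmap P L M f) :=
  (integrable_Tker hL hM hL0 hfm hf).integral_prod_right

lemma fourierTr_Tmap (hL : Measurable L) (hM : Measurable M) (hL0 : P {ω | L ω = 0} = 0)
    {f : ℝ → ℝ} (hfm : Measurable f) (hf : Integrable f) (y : ℝ) :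
    fourierTr (Tmap P L M f) y
      = ∫ ω, Complex.exp (Complex.I * y * ((M ω / L ω : ℝ) : ℂ)) *
          fourierTr f (y / L ω) ∂P := by
  have hker := integrable_Tker hL hM hL0 hfm hf
  have hswap : Integrable (fun z : ℝ × Ω => |L z.2| * f (L z.2 * z.1 - M z.2))
      (volume.prod P) := hker.swap
  have hint : Integrable (fun z : ℝ × Ω =>
      Complex.exp (Complex.I * z.1 * y) * ((|L z.2| * f (L z.2 * z.1 - M z.2) : ℝ) : ℂ))
      (volume.prod P) := by
    refine Integrable.bdd_mul hswap.ofReal ?_ (Eventually.of_forall fun z => le_of_eq (norm_exp_I_mul z.1 y))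
    exact (Complex.measurable_exp.comp
      (((Complex.measurable_ofReal.comp measurable_fst).const_mul
        Complex.I).mul_const (y : ℂ))).aestronglyMeasurable
  calc fourierTr (Tmap P L M f) y
      = ∫ x : ℝ, ∫ ω, Complex.exp (Complex.I * x * y) *
          ((|L ω| * f (L ω * x - M ω) : ℝ) : ℂ) ∂P := by
        unfold fourierTr Tmap
        refine integral_congr_ae (Eventually.of_forall fun x => ?_)
        show Complex.exp (Complex.I * x * y) * ((∫ ω, |L ω| * f (L ω * x - M ω) ∂P : ℝ) : ℂ)
          = ∫ ω, Complex.exp (Complex.I * x * y) * ((|L ω| * f (L ω * x - M ω) : ℝ) : ℂ) ∂P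
        rw [integral_const_mul]
        congr 1
        exact (integral_ofReal (𝕜 := ℂ)).symm
    _ = ∫ ω, ∫ x : ℝ, Complex.exp (Complex.I * x * y) *
          ((|L ω| * f (L ω * x - M ω) : ℝ) : ℂ) ∂(volume) ∂P :=
        integral_integral_swap hint
    _ = ∫ ω, Complex.exp (Complex.I * y * ((M ω / L ω : ℝ) : ℂ)) *
          fourierTr f (y / L ω) ∂P := by
        refine integral_congr_ae ?_
        filter_upwards [aeL hL0] with ω hω
        exact fourierTr_affine hf hω (M ω) y

end Tsection

section ProdSection

variable {Ω : Type*} [MeasurableSpace Ω]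

/-- partial sums in the exponent -/
noncomputable def Sfun (L M : Ω → ℝ) (n : ℕ) (ϖ : ℕ → Ω) : ℝ :=
  ∑ k ∈ Finset.range n, M (ϖ k) / ∏ j ∈ Finset.range (k + 1), L (ϖ j)

/-- partial products -/
noncomputable def Qfun (L : Ω → ℝ) (n : ℕ) (ϖ : ℕ → Ω) : ℝ :=
  ∏ j ∈ Finset.range n, L (ϖ j)

/-- the integrand of `Ifun` -/
noncomputable def J (L M : Ω → ℝ) (h : ℝ → ℝ) (n : ℕ) (x : ℝ) (ϖ : ℕ → Ω) : ℂ :=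
  Complex.exp (Complex.I * x * ((Sfun L M n ϖ : ℝ) : ℂ)) * fourierTr h (x / Qfun L n ϖ)

variable {L M : Ω → ℝ}

lemma Ifun_eq (Pinf : Measure (ℕ → Ω)) (L M : Ω → ℝ) (h : ℝ → ℝ) (n : ℕ) (x : ℝ) :
    Ifun Pinf L M h n x = ∫ ϖ, J L M h n x ϖ ∂Pinf := rfl

lemma measurable_Sfun (hL : Measurable L) (hM : Measurable M) (n : ℕ) :
    Measurable (Sfun L M n) := by
  refine Finset.measurable_sum _ fun k _ => ?_
  exact (hM.comp (measurable_pi_apply k)).div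
    (Finset.measurable_prod _ fun j _ => hL.comp (measurable_pi_apply j))

lemma measurable_Qfun (hL : Measurable L) (n : ℕ) : Measurable (Qfun L n) :=
  Finset.measurable_prod _ fun j _ => hL.comp (measurable_pi_apply j)

lemma measurable_J (hL : Measurable L) (hM : Measurable M) {h : ℝ → ℝ} (hh : Integrable h)
    (n : ℕ) (x : ℝ) : Measurable (J L M h n x) := by
  refine Measurable.mul ?_ ?_
  · exact Complex.measurable_exp.comp
      ((Complex.measurable_ofReal.comp (measurable_Sfun hL hM n)).const_mul (Complex.I * x))
  · exact (continuous_fourierTr hh).measurable.comp (measurable_const.div (measurable_Qfun hL n))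

lemma norm_J_le (h : ℝ → ℝ) (n : ℕ) (x : ℝ) (ϖ : ℕ → Ω) :
    ‖J L M h n x ϖ‖ ≤ ∫ t, ‖h t‖ := by
  rw [J, norm_mul, norm_exp_I_mul, one_mul]
  exact norm_fourierTr_le h _

lemma J_congr (h : ℝ → ℝ) (n : ℕ) (x : ℝ) {ϖ ϖ' : ℕ → Ω}
    (hc : ∀ k < n, ϖ k = ϖ' k) : J L M h n x ϖ = J L M h n x ϖ' := by
  have hQ : ∀ m ≤ n, Qfun L m ϖ = Qfun L m ϖ' := by
    intro m hm
    exact Finset.prod_congr rfl fun j hj => by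
      rw [hc j (lt_of_lt_of_le (Finset.mem_range.1 hj) hm)]
  have hS : Sfun L M n ϖ = Sfun L M n ϖ' := by
    refine Finset.sum_congr rfl fun k hk => ?_
    have hk' := Finset.mem_range.1 hk
    rw [hc k hk']
    congr 1
    exact hQ (k + 1) (Nat.succ_le_of_lt hk')
  rw [J, J, hS, hQ n le_rfl]

lemma J_zero (h : ℝ → ℝ) (x : ℝ) (ϖ : ℕ → Ω) : J L M h 0 x ϖ = fourierTr h x := by
  simp [J, Sfun, Qfun]

lemma Ifun_zero (Pinf : Measure (ℕ → Ω)) [IsProbabilityMeasure Pinf] (h : ℝ → ℝ) (x : ℝ) :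
    Ifun Pinf L M h 0 x = fourierTr h x := by
  rw [Ifun_eq]
  simp only [J_zero]
  simp

lemma Ifun_congr_fourier {h₁ h₂ : ℝ → ℝ} (Pinf : Measure (ℕ → Ω))
    (hfour : ∀ y, fourierTr h₁ y = fourierTr h₂ y) (n : ℕ) (x : ℝ) :
    Ifun Pinf L M h₁ n x = Ifun Pinf L M h₂ n x := by
  rw [Ifun_eq, Ifun_eq]
  refine integral_congr_ae (Eventually.of_forall fun ϖ => ?_)
  rw [J, J, hfour]

lemma integrable_J_comp (hL : Measurable L) (hM : Measurable M) {h : ℝ → ℝ}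
    (hh : Integrable h) (n : ℕ) (x : ℝ) {α : Type*} [MeasurableSpace α] {μ : Measure α}
    [IsProbabilityMeasure μ] {e : α → ℕ → Ω} (he : Measurable e) :
    Integrable (fun a => J L M h n x (e a)) μ := by
  refine Integrable.mono' (integrable_const (∫ t, ‖h t‖))
    (((measurable_J hL hM hh n x).comp he).aestronglyMeasurable)
    (Eventually.of_forall fun a => norm_J_le h n x (e a))

lemma Ifun_add (hL : Measurable L) (hM : Measurable M) {h₁ h₂ h₃ : ℝ → ℝ}
    (hh₂ : Integrable h₂) (hh₃ : Integrable h₃)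
    (hfour : ∀ y, fourierTr h₁ y = fourierTr h₂ y + fourierTr h₃ y)
    (Pinf : Measure (ℕ → Ω)) [IsProbabilityMeasure Pinf] (n : ℕ) (x : ℝ) :
    Ifun Pinf L M h₁ n x = Ifun Pinf L M h₂ n x + Ifun Pinf L M h₃ n x := by
  have i2 : Integrable (fun ϖ : ℕ → Ω => J L M h₂ n x ϖ) Pinf :=
    integrable_J_comp hL hM hh₂ n x measurable_id
  have i3 : Integrable (fun ϖ : ℕ → Ω => J L M h₃ n x ϖ) Pinf :=
    integrable_J_comp hL hM hh₃ n x measurable_id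
  rw [Ifun_eq, Ifun_eq, Ifun_eq, ← integral_add i2 i3]
  refine integral_congr_ae (Eventually.of_forall fun ϖ => ?_)
  simp only [J, hfour]
  ring

/-- restriction to the first `n` coordinates -/
def restr (n : ℕ) : (ℕ → Ω) → (Fin n → Ω) := fun ϖ i => ϖ i

lemma measurable_restr (n : ℕ) : Measurable (restr (Ω := Ω) n) :=
  measurable_pi_lambda _ fun i => measurable_pi_apply _

/-- extension by a junk value -/
def extend (ω0 : Ω) (n : ℕ) (y : Fin n → Ω) : ℕ → Ω := fun k =>
  if hk : k < n then y ⟨k, hk⟩ else ω0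

lemma measurable_extend (ω0 : Ω) (n : ℕ) : Measurable (extend ω0 n) := by
  refine measurable_pi_lambda _ fun k => ?_
  by_cases hk : k < n
  · simpa [extend, hk] using measurable_pi_apply (⟨k, hk⟩ : Fin n)
  · simpa [extend, hk] using measurable_const

lemma extend_restr (ω0 : Ω) (n : ℕ) (ϖ : ℕ → Ω) :
    ∀ k < n, ϖ k = extend ω0 n (restr n ϖ) k := by
  intro k hk
  simp [extend, restr, hk]

lemma extend_snoc_lt (ω0 : Ω) (n : ℕ) (y : Fin n → Ω) (w : Ω) :
    ∀ k < n, extend ω0 (n + 1) (Fin.snoc y w) k = extend ω0 n y k := by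
  intro k hk
  have hk1 : k < n + 1 := Nat.lt_succ_of_lt hk
  simp only [extend, dif_pos hk, dif_pos hk1]
  rw [show (⟨k, hk1⟩ : Fin (n + 1)) = Fin.castSucc ⟨k, hk⟩ from rfl, Fin.snoc_castSucc]

lemma extend_snoc_last (ω0 : Ω) (n : ℕ) (y : Fin n → Ω) (w : Ω) :
    extend ω0 (n + 1) (Fin.snoc y w) n = w := by
  simp only [extend, dif_pos (Nat.lt_succ_self n)]
  rw [show (⟨n, Nat.lt_succ_self n⟩ : Fin (n + 1)) = Fin.last n from rfl, Fin.snoc_last]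

variable {P : Measure Ω} [IsProbabilityMeasure P] {Pinf : Measure (ℕ → Ω)}
  [IsProbabilityMeasure Pinf]

lemma map_restr
    (hprod : ∀ (n : ℕ) (A : ℕ → Set Ω), (∀ i, MeasurableSet (A i)) →
      Pinf {ϖ | ∀ i < n, ϖ i ∈ A i} = ∏ i ∈ Finset.range n, P (A i)) (n : ℕ) :
    Measure.map (restr n) Pinf = Measure.pi (fun _ : Fin n => P) := by
  refine (Measure.pi_eq fun s hs => ?_).symm
  rw [Measure.map_apply (measurable_restr n) (MeasurableSet.univ_pi hs)]
  classical
  set A : ℕ → Set Ω := fun k => if hk : k < n then s ⟨k, hk⟩ else Set.univ with hA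
  have hpre : restr (Ω := Ω) n ⁻¹' Set.univ.pi s = {ϖ | ∀ i < n, ϖ i ∈ A i} := by
    ext ϖ
    simp only [Set.mem_preimage, Set.mem_pi, Set.mem_univ, forall_true_left, Set.mem_setOf_eq,
      true_implies]
    constructor
    · intro hx k hk
      simp only [hA, dif_pos hk]
      exact hx ⟨k, hk⟩
    · intro hx i
      have := hx i.1 i.2
      simpa only [hA, dif_pos i.2, Fin.eta, restr] using this
  have hAm : ∀ i, MeasurableSet (A i) := by
    intro i
    by_cases hi : i < n
    · simpa [hA, hi] using hs ⟨i, hi⟩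
    · simp [hA, hi]
  rw [hpre, hprod n A hAm]
  have h2 : ∀ i : Fin n, P (s i) = P (A i.1) := by
    intro i
    simp [hA, i.2]
  calc ∏ i ∈ Finset.range n, P (A i) = ∏ i : Fin n, P (A i.1) :=
        (Fin.prod_univ_eq_prod_range (fun k => P (A k)) n).symm
    _ = ∏ i : Fin n, P (s i) := by
        exact Finset.prod_congr rfl fun i _ => (h2 i).symm
  
lemma integral_restr
    (hprod : ∀ (n : ℕ) (A : ℕ → Set Ω), (∀ i, MeasurableSet (A i)) →
      Pinf {ϖ | ∀ i < n, ϖ i ∈ A i} = ∏ i ∈ Finset.range n, P (A i)) (n : ℕ)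
    {F : (Fin n → Ω) → ℂ} (hF : Measurable F) :
    ∫ ϖ, F (restr n ϖ) ∂Pinf = ∫ y, F y ∂(Measure.pi (fun _ : Fin n => P)) := by
  rw [← map_restr hprod n]
  exact (integral_map (measurable_restr n).aemeasurable hF.aestronglyMeasurable).symm

lemma J_extend_snoc (ω0 : Ω) (h : ℝ → ℝ) (n : ℕ) (x : ℝ) (y : Fin n → Ω) (w : Ω) :
    J L M h (n + 1) x (extend ω0 (n + 1) (Fin.snoc y w))
      = Complex.exp (Complex.I * x * ((Sfun L M n (extend ω0 n y) : ℝ) : ℂ)) *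
        (Complex.exp (Complex.I * ((x / Qfun L n (extend ω0 n y) : ℝ) : ℂ) *
            ((M w / L w : ℝ) : ℂ)) *
          fourierTr h ((x / Qfun L n (extend ω0 n y)) / L w)) := by
  set z := extend ω0 (n + 1) (Fin.snoc y w) with hz
  set v := extend ω0 n y with hv
  have hlt : ∀ k < n, z k = v k := extend_snoc_lt ω0 n y w
  have hlast : z n = w := extend_snoc_last ω0 n y w
  have hQ : ∀ m ≤ n, Qfun L m z = Qfun L m v := fun m hm =>
    Finset.prod_congr rfl fun j hj => by rw [hlt j (lt_of_lt_of_le (Finset.mem_range.1 hj) hm)]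
  have hQ1 : Qfun L (n + 1) z = Qfun L n v * L w := by
    rw [Qfun, Finset.prod_range_succ, hlast]
    congr 1
    exact hQ n le_rfl
  have hS : Sfun L M (n + 1) z = Sfun L M n v + M w / (Qfun L n v * L w) := by
    have hsum : ∑ k ∈ Finset.range n, M (z k) / ∏ j ∈ Finset.range (k + 1), L (z j)
        = Sfun L M n v := by
      refine Finset.sum_congr rfl fun k hk => ?_
      have hk' := Finset.mem_range.1 hk
      rw [hlt k hk']
      congr 1
      exact hQ (k + 1) (Nat.succ_le_of_lt hk')
    have hp : (∏ j ∈ Finset.range (n + 1), L (z j)) = Qfun L n v * L w := hQ1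
    rw [show Sfun L M (n + 1) z = ∑ k ∈ Finset.range (n + 1),
        M (z k) / ∏ j ∈ Finset.range (k + 1), L (z j) from rfl,
      Finset.sum_range_succ, hsum, hlast, hp]
  rw [J, hS, hQ1, div_div]
  have hexp : Complex.I * x * ((Sfun L M n v + M w / (Qfun L n v * L w) : ℝ) : ℂ)
      = Complex.I * x * ((Sfun L M n v : ℝ) : ℂ)
        + Complex.I * ((x / Qfun L n v : ℝ) : ℂ) * ((M w / L w : ℝ) : ℂ) := by
    push_cast
    ring
  rw [hexp, Complex.exp_add, mul_assoc]

lemma Ifun_succ (hL : Measurable L) (hM : Measurable M) (hL0 : P {ω | L ω = 0} = 0)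
    {h : ℝ → ℝ} (hhm : Measurable h) (hh : Integrable h)
    (hprod : ∀ (n : ℕ) (A : ℕ → Set Ω), (∀ i, MeasurableSet (A i)) →
      Pinf {ϖ | ∀ i < n, ϖ i ∈ A i} = ∏ i ∈ Finset.range n, P (A i))
    (ω0 : Ω) (n : ℕ) (x : ℝ) :
    Ifun Pinf L M h (n + 1) x = Ifun Pinf L M (Tmap P L M h) n x := by
  have hT : Integrable (Tmap P L M h) := integrable_Tmap hL hM hL0 hhm hh
  set πm : Measure (Fin n → Ω) := Measure.pi (fun _ : Fin n => P) with hπm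
  set πm1 : Measure (Fin (n + 1) → Ω) := Measure.pi (fun _ : Fin (n + 1) => P) with hπm1
  -- the function appearing after splitting off the last coordinate
  set φ : (Fin n → Ω) × Ω → ℂ := fun q =>
    Complex.exp (Complex.I * x * ((Sfun L M n (extend ω0 n q.1) : ℝ) : ℂ)) *
      (Complex.exp (Complex.I * ((x / Qfun L n (extend ω0 n q.1) : ℝ) : ℂ) *
          ((M q.2 / L q.2 : ℝ) : ℂ)) *
        fourierTr h ((x / Qfun L n (extend ω0 n q.1)) / L q.2)) with hφ
  have hφm : Measurable φ := by
    have hSm : Measurable fun q : (Fin n → Ω) × Ω => Sfun L M n (extend ω0 n q.1) :=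
      (measurable_Sfun hL hM n).comp ((measurable_extend ω0 n).comp measurable_fst)
    have hQm : Measurable fun q : (Fin n → Ω) × Ω => Qfun L n (extend ω0 n q.1) :=
      (measurable_Qfun hL n).comp ((measurable_extend ω0 n).comp measurable_fst)
    refine Measurable.mul ?_ (Measurable.mul ?_ ?_)
    · exact Complex.measurable_exp.comp
        ((Complex.measurable_ofReal.comp hSm).const_mul (Complex.I * x))
    · refine Complex.measurable_exp.comp ?_
      refine Measurable.mul ?_ ?_
      · exact (Complex.measurable_ofReal.comp ((measurable_const (a := x)).div hQm)).const_mul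
          Complex.I
      · exact Complex.measurable_ofReal.comp
          ((hM.comp measurable_snd).div (hL.comp measurable_snd))
    · exact (continuous_fourierTr hh).measurable.comp
        ((measurable_const.div hQm).div (hL.comp measurable_snd))
  have hφi : Integrable φ (πm.prod P) := by
    refine Integrable.mono' (integrable_const (∫ t, ‖h t‖)) hφm.aestronglyMeasurable
      (Eventually.of_forall fun q => ?_)
    rw [hφ]
    simp only
    rw [norm_mul, norm_mul, norm_exp_I_mul, norm_exp_I_mul, one_mul, one_mul]
    exact norm_fourierTr_le h _
  -- LHS computation
  have mp := measurePreserving_piFinSuccAbove (fun _ : Fin (n + 1) => P) (Fin.last n)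
  have lhs1 : Ifun Pinf L M h (n + 1) x
      = ∫ y, J L M h (n + 1) x (extend ω0 (n + 1) y) ∂πm1 := by
    rw [Ifun_eq]
    have : ∀ ϖ : ℕ → Ω, J L M h (n + 1) x ϖ
        = J L M h (n + 1) x (extend ω0 (n + 1) (restr (n + 1) ϖ)) :=
      fun ϖ => J_congr h (n + 1) x (extend_restr ω0 (n + 1) ϖ)
    rw [integral_congr_ae (Eventually.of_forall this)]
    exact integral_restr hprod (n + 1)
      ((measurable_J hL hM hh (n + 1) x).comp (measurable_extend ω0 (n + 1)))
  have lhs2 : ∫ y, J L M h (n + 1) x (extend ω0 (n + 1) y) ∂πm1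
      = ∫ p : Ω × (Fin n → Ω), φ (p.2, p.1) ∂(P.prod πm) := by
    rw [← mp.integral_comp' (f := MeasurableEquiv.piFinSuccAbove (fun _ : Fin (n + 1) => Ω)
      (Fin.last n)) (fun p => φ (p.2, p.1))]
    refine integral_congr_ae (Eventually.of_forall fun y => ?_)
    show J L M h (n + 1) x (extend ω0 (n + 1) y)
      = φ (((MeasurableEquiv.piFinSuccAbove (fun _ : Fin (n + 1) => Ω) (Fin.last n)) y).2,
          ((MeasurableEquiv.piFinSuccAbove (fun _ : Fin (n + 1) => Ω) (Fin.last n)) y).1)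
    have hey : ((MeasurableEquiv.piFinSuccAbove (fun _ : Fin (n + 1) => Ω) (Fin.last n)) y)
        = (y (Fin.last n), fun j : Fin n => y ((Fin.last n).succAbove j)) := rfl
    have h2 : (fun j : Fin n => y ((Fin.last n).succAbove j)) = Fin.init y := by
      funext j
      rw [Fin.succAbove_last]
      rfl
    rw [hey]
    simp only [h2]
    calc J L M h (n + 1) x (extend ω0 (n + 1) y)
        = J L M h (n + 1) x (extend ω0 (n + 1) (Fin.snoc (Fin.init y) (y (Fin.last n)))) := by
          rw [Fin.snoc_init_self]
      _ = φ (Fin.init y, y (Fin.last n)) := by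
          rw [hφ]
          exact J_extend_snoc ω0 h n x (Fin.init y) (y (Fin.last n))
  have rhs1 : Ifun Pinf L M (Tmap P L M h) n x
      = ∫ y, J L M (Tmap P L M h) n x (extend ω0 n y) ∂πm := by
    rw [Ifun_eq]
    have : ∀ ϖ : ℕ → Ω, J L M (Tmap P L M h) n x ϖ
        = J L M (Tmap P L M h) n x (extend ω0 n (restr n ϖ)) :=
      fun ϖ => J_congr _ n x (extend_restr ω0 n ϖ)
    rw [integral_congr_ae (Eventually.of_forall this)]
    exact integral_restr hprod n
      ((measurable_J hL hM hT n x).comp (measurable_extend ω0 n))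
  have rhs2 : ∫ y, J L M (Tmap P L M h) n x (extend ω0 n y) ∂πm
      = ∫ y, (∫ w, φ (y, w) ∂P) ∂πm := by
    refine integral_congr_ae (Eventually.of_forall fun y => ?_)
    show J L M (Tmap P L M h) n x (extend ω0 n y) = ∫ w, φ (y, w) ∂P
    rw [J, fourierTr_Tmap hL hM hL0 hhm hh, ← integral_const_mul]
  rw [lhs1, lhs2, rhs1, rhs2]
  rw [← integral_prod _ hφi]
  rw [← integral_prod_swap φ]
  rfl

end ProdSection

section AeCongr

variable {Ω : Type*} [MeasurableSpace Ω] {P : Measure Ω} [IsProbabilityMeasure P]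
  {L M : Ω → ℝ}

lemma ae_T_congr (hL : Measurable L) (hM : Measurable M) (hL0 : P {ω | L ω = 0} = 0)
    {f f' : ℝ → ℝ} (hff' : f =ᵐ[volume] f') :
    ∀ᵐ x : ℝ ∂volume, Tmap P L M f x = Tmap P L M f' x := by
  have h0 : volume {t : ℝ | ¬ f t = f' t} = 0 := ae_iff.1 hff'
  obtain ⟨N, hNsub, hNm, hN0⟩ := exists_measurable_superset_of_null h0
  set s : Set (ℝ × Ω) := {p | L p.2 * p.1 - M p.2 ∈ N} with hs
  have hmap : Measurable fun p : ℝ × Ω => L p.2 * p.1 - M p.2 :=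
    ((hL.comp measurable_snd).mul measurable_fst).sub (hM.comp measurable_snd)
  have hsm : MeasurableSet s := hmap hNm
  have hs0 : (volume.prod P) s = 0 := by
    rw [← Measure.prod_swap, Measure.map_apply measurable_swap hsm]
    have hpre : Prod.swap ⁻¹' s = (fun q : Ω × ℝ => L q.1 * q.2 - M q.1) ⁻¹' N := rfl
    have hmap2 : Measurable fun q : Ω × ℝ => L q.1 * q.2 - M q.1 :=
      ((hL.comp measurable_fst).mul measurable_snd).sub (hM.comp measurable_fst)
    rw [hpre, Measure.prod_apply (hmap2 hNm)]
    have hzero : ∀ᵐ ω ∂P,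
        volume (Prod.mk ω ⁻¹' ((fun q : Ω × ℝ => L q.1 * q.2 - M q.1) ⁻¹' N)) = 0 := by
      filter_upwards [aeL hL0] with ω hω
      have hset : Prod.mk ω ⁻¹' ((fun q : Ω × ℝ => L q.1 * q.2 - M q.1) ⁻¹' N)
          = (fun x : ℝ => L ω * x) ⁻¹' ((fun u : ℝ => u - M ω) ⁻¹' N) := rfl
      rw [hset, Real.volume_preimage_mul_left hω]
      have : (fun u : ℝ => u - M ω) ⁻¹' N = (fun u : ℝ => u + (-(M ω))) ⁻¹' N := by
        simp [sub_eq_add_neg]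
      rw [this, measure_preimage_add_right volume (-(M ω)) N, hN0, mul_zero]
    rw [lintegral_congr_ae hzero, lintegral_zero]
  have hae : ∀ᵐ p : ℝ × Ω ∂(volume.prod P), p ∉ s := (measure_eq_zero_iff_ae_notMem).1 hs0
  have hae2 := Measure.ae_ae_of_ae_prod hae
  filter_upwards [hae2] with x hx
  refine integral_congr_ae ?_
  filter_upwards [hx] with ω hω
  have : f (L ω * x - M ω) = f' (L ω * x - M ω) := by
    by_contra hne
    exact hω (hNsub hne)
  rw [this]

end AeCongr

section Injectivity

open scoped FourierTransform

/-- a smooth compactly supported function, as a Schwartz map -/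
noncomputable def ofCompactSupport (φ : ℝ → ℂ) (h1 : ContDiff ℝ ((⊤ : ℕ∞) : WithTop ℕ∞) φ)
    (h2 : HasCompactSupport φ) : SchwartzMap ℝ ℂ where
  toFun := φ
  smooth' := h1
  decay' := by
    intro k n
    have hcont : Continuous fun x : ℝ => ‖x‖ ^ k * ‖iteratedFDeriv ℝ n φ x‖ :=
      ((continuous_norm).pow k).mul
        (h1.continuous_iteratedFDeriv (by exact_mod_cast le_top)).norm
    have hsupp : HasCompactSupport fun x : ℝ => ‖x‖ ^ k * ‖iteratedFDeriv ℝ n φ x‖ :=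
      ((h2.iteratedFDeriv n).norm).mul_left
    obtain ⟨C, hC⟩ := hsupp.exists_bound_of_continuous hcont
    exact ⟨C, fun x => (le_abs_self _).trans ((Real.norm_eq_abs _) ▸ hC x)⟩

lemma ae_zero_of_fourierIntegral_zero {φ : ℝ → ℂ} (hφ : Integrable φ)
    (h0 : ∀ w : ℝ, 𝓕 φ w = 0) : φ =ᵐ[volume] 0 := by
  refine ae_eq_zero_of_integral_contDiff_smul_eq_zero hφ.locallyIntegrable ?_
  intro g hgsm hgsupp
  have hgc : ContDiff ℝ ((⊤ : ℕ∞) : WithTop ℕ∞) fun t : ℝ => (g t : ℂ) :=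
    Complex.ofRealCLM.contDiff.comp hgsm
  have hgcs : HasCompactSupport fun t : ℝ => (g t : ℂ) :=
    hgsupp.comp_left (g := Complex.ofReal) Complex.ofReal_zero
  set Gc : SchwartzMap ℝ ℂ := ofCompactSupport _ hgc hgcs with hGc
  set ψ : SchwartzMap ℝ ℂ := (FourierTransform.fourierCLE ℂ (SchwartzMap ℝ ℂ)).symm Gc with hψ
  have hFψ : 𝓕 ⇑ψ = ⇑Gc := by
    have h1 := (FourierTransform.fourierCLE ℂ (SchwartzMap ℝ ℂ)).apply_symm_apply Gc
    rw [← hψ, FourierTransform.fourierCLE_apply] at h1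
    rw [← SchwartzMap.fourier_coe, h1]
  have hflip : (innerₗ ℝ).flip = innerₗ ℝ :=
    LinearMap.ext fun a => LinearMap.ext fun b => real_inner_comm a b
  have hmul := VectorFourier.integral_fourierIntegral_smul_eq_flip
    (e := Real.fourierChar) (L := innerₗ ℝ) (μ := volume) (ν := volume)
    Real.continuous_fourierChar (by exact continuous_inner) ψ.integrable hφ
  rw [hflip] at hmul
  have h2 : ∀ x : ℝ, g x • φ x = (𝓕 ⇑ψ) x • φ x := by
    intro x
    rw [hFψ]
    rfl
  calc ∫ x, g x • φ x = ∫ ξ : ℝ, (𝓕 ⇑ψ) ξ • φ ξ :=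
        integral_congr_ae (Eventually.of_forall h2)
    _ = ∫ x : ℝ, ψ x • (𝓕 φ) x := hmul
    _ = 0 := by
        simp only [h0, smul_zero, integral_zero]

lemma fourierTr_zero_ae {d : ℝ → ℝ} (hd : Integrable d) (h0 : ∀ x, fourierTr d x = 0) :
    d =ᵐ[volume] 0 := by
  have hF : ∀ w : ℝ, 𝓕 (fun t : ℝ => (d t : ℂ)) w = 0 := by
    intro w
    have h1 := fourierTr_eq_fourierIntegral d (-(2 * Real.pi) * w)
    rw [h0] at h1
    have harg : (-(-(2 * Real.pi) * w) / (2 * Real.pi)) = w := by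
      have : (2 * Real.pi) ≠ 0 := by positivity
      field_simp
    rw [harg] at h1
    exact h1.symm
  have hae := ae_zero_of_fourierIntegral_zero hd.ofReal hF
  filter_upwards [hae] with t ht
  simp only [Pi.zero_apply] at ht ⊢
  exact Complex.ofReal_eq_zero.mp ht

end Injectivity

end VgAux

open VgAux in
/-- **Lemma 2.2.** `f ∈ V_g` iff for every `N ≥ 1` and every `x`,
`f̂(x) = I_{f,N}(x) + Σ_{n=1}^{N-1} I_{g,n}(x) + ĝ(x)`. -/
theorem mem_Vg_iff_iterated_fourier
    {Ω : Type*} [MeasurableSpace Ω] (P : Measure Ω) [IsProbabilityMeasure P]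
    (L M : Ω → ℝ) (hL : Measurable L) (hM : Measurable M)
    (hL0 : P {ω | L ω = 0} = 0)
    (Pinf : Measure (ℕ → Ω)) [IsProbabilityMeasure Pinf]
    (hprod : ∀ (n : ℕ) (A : ℕ → Set Ω), (∀ i, MeasurableSet (A i)) →
      Pinf {ϖ | ∀ i < n, ϖ i ∈ A i} = ∏ i ∈ Finset.range n, P (A i))
    (g : ℝ → ℝ) (hg : Integrable g)
    (f : ℝ → ℝ) (hf : Integrable f) :
    (∀ᵐ x : ℝ ∂volume,
        f x = (∫ ω, |L ω| * f (L ω * x - M ω) ∂P) + g x) ↔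
    (∀ N : ℕ, 1 ≤ N → ∀ x : ℝ,
        fourierTr f x = Ifun Pinf L M f N x +
          (∑ n ∈ Finset.Ico 1 N, Ifun Pinf L M g n x) + fourierTr g x) := by
  classical
  have hΩ : Nonempty Ω := by
    by_contra hne
    rw [not_nonempty_iff] at hne
    have h1 : (Set.univ : Set Ω) = ∅ := Set.univ_eq_empty_iff.2 hne
    have h2 : P Set.univ = 1 := measure_univ
    rw [h1] at h2
    simp at h2
  obtain ⟨ω0⟩ := hΩ
  -- measurable representatives
  set f' : ℝ → ℝ := hf.1.mk f with hf'def
  have hff' : f =ᵐ[volume] f' := hf.1.ae_eq_mk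
  have hf'm : Measurable f' := hf.1.stronglyMeasurable_mk.measurable
  have hf' : Integrable f' := hf.congr hff'
  set g' : ℝ → ℝ := hg.1.mk g with hg'def
  have hgg' : g =ᵐ[volume] g' := hg.1.ae_eq_mk
  have hg'm : Measurable g' := hg.1.stronglyMeasurable_mk.measurable
  have hg' : Integrable g' := hg.congr hgg'
  have hTf' : Integrable (Tmap P L M f') := integrable_Tmap hL hM hL0 hf'm hf'
  -- transfer of the refinement equation
  have hLHS : (∀ᵐ x : ℝ ∂volume, f x = (∫ ω, |L ω| * f (L ω * x - M ω) ∂P) + g x)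
      ↔ (∀ᵐ x : ℝ ∂volume, f' x = Tmap P L M f' x + g' x) := by
    have hT := ae_T_congr hL hM hL0 hff'
    constructor <;> intro H <;> filter_upwards [H, hT, hff', hgg'] with x h1 h2 h3 h4
    · calc f' x = f x := h3.symm
        _ = (∫ ω, |L ω| * f (L ω * x - M ω) ∂P) + g x := h1
        _ = Tmap P L M f x + g x := rfl
        _ = Tmap P L M f' x + g' x := by rw [h2, h4]
    · calc f x = f' x := h3
        _ = Tmap P L M f' x + g' x := h1
        _ = Tmap P L M f x + g' x := by rw [h2]
        _ = (∫ ω, |L ω| * f (L ω * x - M ω) ∂P) + g x := by rw [← h4]; rfl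
  -- transfer of the Fourier side
  have hfourf : fourierTr f = fourierTr f' := fourierTr_congr hff'
  have hfourg : fourierTr g = fourierTr g' := fourierTr_congr hgg'
  have hIfun_f : ∀ (n : ℕ) (x : ℝ), Ifun Pinf L M f n x = Ifun Pinf L M f' n x :=
    fun n x => Ifun_congr_fourier Pinf (fun y => by rw [hfourf]) n x
  have hIfun_g : ∀ (n : ℕ) (x : ℝ), Ifun Pinf L M g n x = Ifun Pinf L M g' n x :=
    fun n x => Ifun_congr_fourier Pinf (fun y => by rw [hfourg]) n x
  rw [hLHS]
  constructor
  · intro H N hN x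
    have hfour : ∀ y, fourierTr f' y = fourierTr (Tmap P L M f') y + fourierTr g' y := by
      intro y
      have h1 : fourierTr f' = fourierTr (fun u => Tmap P L M f' u + g' u) :=
        fourierTr_congr H
      rw [h1, fourierTr_add hTf' hg' y]
    have key : ∀ N : ℕ, ∀ x : ℝ, fourierTr f' x = Ifun Pinf L M f' (N + 1) x
        + (∑ n ∈ Finset.Ico 1 (N + 1), Ifun Pinf L M g' n x) + fourierTr g' x := by
      intro N
      induction N with
      | zero =>
        intro x
        simp only [Finset.Ico_self, Finset.sum_empty, add_zero]
        rw [Ifun_succ hL hM hL0 hf'm hf' hprod ω0 0 x, Ifun_zero]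
        exact hfour x
      | succ N ih =>
        intro x
        have e1 : Ifun Pinf L M f' (N + 1) x
            = Ifun Pinf L M (Tmap P L M f') (N + 1) x + Ifun Pinf L M g' (N + 1) x :=
          Ifun_add hL hM hTf' hg' hfour Pinf (N + 1) x
        have e2 : Ifun Pinf L M f' (N + 2) x
            = Ifun Pinf L M (Tmap P L M f') (N + 1) x :=
          Ifun_succ hL hM hL0 hf'm hf' hprod ω0 (N + 1) x
        rw [ih x, e1, e2, Finset.sum_Ico_succ_top (by omega : 1 ≤ N + 1)]
        ring
    obtain ⟨N', rfl⟩ : ∃ N', N = N' + 1 := ⟨N - 1, by omega⟩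
    simp only [hfourf, hfourg, hIfun_f, hIfun_g]
    exact key N' x
  · intro H
    have hx1 := fun x => H 1 le_rfl x
    simp only [Finset.Ico_self, Finset.sum_empty, add_zero] at hx1
    have h2 : ∀ x, fourierTr f' x = fourierTr (fun u => Tmap P L M f' u + g' u) x := by
      intro x
      rw [fourierTr_add hTf' hg' x]
      have e2 : Ifun Pinf L M f' 1 x = fourierTr (Tmap P L M f') x := by
        rw [show (1 : ℕ) = 0 + 1 from rfl, Ifun_succ hL hM hL0 hf'm hf' hprod ω0 0 x,
          Ifun_zero]
      rw [← e2]
      have h3 := hx1 x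
      simp only [hfourf, hfourg, hIfun_f] at h3
      exact h3
    have hTg : Integrable (fun u => Tmap P L M f' u + g' u) := hTf'.add hg'
    have hd : Integrable (fun u => f' u - (Tmap P L M f' u + g' u)) := hf'.sub hTg
    have h0 : ∀ x, fourierTr (fun u => f' u - (Tmap P L M f' u + g' u)) x = 0 := by
      intro x
      rw [fourierTr_sub hf' hTg x, ← h2 x, sub_self]
    have hae := fourierTr_zero_ae hd h0
    filter_upwards [hae] with x hx
    simp only [Pi.zero_apply] at hx
    exact sub_eq_zero.1 hx
end

section
/- (Proposition 3.1) Assume L(ω) > 0 for P-almost all ω ∈ Ω. Then for f ∈ L¹(ℝ), f belongs to V_g if and only if the function F : ℝ → ℝ defined by F(x) = ∫_{−∞}^x f(t) dt satisfies F(x) = ∫_Ω F(L(ω)x − M(ω)) P(dω) + G(x) for every x ∈ ℝ, where G(x) = ∫_{−∞}^x g(t) dt. -/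
open MeasureTheory Filter Topology

section Helpers

/-- The affine map `t ↦ a*t - b` is a measurable embedding when `a ≠ 0`. -/
lemma affEmb {a : ℝ} (ha : a ≠ 0) (b : ℝ) :
    MeasurableEmbedding (fun t : ℝ => a * t - b) := by
  have h := (affineHomeomorph a (-b) ha).measurableEmbedding
  have he : (⇑(affineHomeomorph a (-b) ha) : ℝ → ℝ) = fun t : ℝ => a * t - b := by
    funext t
    show a * t + (-b) = a * t - b
    ring
  rwa [he] at h

lemma affMap {a : ℝ} (ha : a ≠ 0) (b : ℝ) :
    Measure.map (fun t : ℝ => a * t - b) (volume : Measure ℝ)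
      = ENNReal.ofReal |a⁻¹| • volume := by
  have h1 : (fun t : ℝ => a * t - b) = (fun s : ℝ => s + (-b)) ∘ (fun t : ℝ => a * t) := by
    funext t; simp [sub_eq_add_neg]
  rw [h1, ← Measure.map_map (measurable_add_const (-b)) (measurable_const_mul a)]
  have h2 : Measure.map (fun t : ℝ => a * t) (volume : Measure ℝ)
      = ENNReal.ofReal |a⁻¹| • volume := Real.map_volume_mul_left ha
  rw [h2, Measure.map_smul, map_add_right_eq_self (volume : Measure ℝ) (-b)]

lemma affPre {a : ℝ} (ha : 0 < a) (b x : ℝ) :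
    (fun t : ℝ => a * t - b) ⁻¹' (Set.Iic (a * x - b)) = Set.Iic x := by
  ext t
  simp only [Set.mem_preimage, Set.mem_Iic, sub_le_sub_iff_right, mul_le_mul_iff_right₀ ha]

lemma affNull {N : Set ℝ} (hNm : MeasurableSet N) (hN : volume N = 0)
    {a : ℝ} (ha : a ≠ 0) (b : ℝ) :
    volume ((fun t : ℝ => a * t - b) ⁻¹' N) = 0 := by
  have hmeas : Measurable (fun t : ℝ => a * t - b) := (measurable_const_mul a).sub measurable_const
  have h := Measure.map_apply hmeas hNm (μ := (volume : Measure ℝ))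
  rw [affMap ha] at h
  simp only [Measure.smul_apply, smul_eq_mul, hN, mul_zero] at h
  exact h.symm ▸ rfl

lemma affSetIntegral (f : ℝ → ℝ) {a : ℝ} (ha : 0 < a) (b x : ℝ) :
    ∫ t in Set.Iic x, a * f (a * t - b) = ∫ s in Set.Iic (a * x - b), f s := by
  have he := affEmb ha.ne' b
  have h1 : ∫ s in Set.Iic (a * x - b), f s
        ∂(Measure.map (fun t : ℝ => a * t - b) volume)
      = ∫ t in Set.Iic x, f (a * t - b) := by
    rw [he.setIntegral_map, affPre ha]
  rw [affMap ha.ne', Measure.restrict_smul, integral_smul_measure] at h1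
  have htr : (ENNReal.ofReal |a⁻¹|).toReal = a⁻¹ := by
    rw [ENNReal.toReal_ofReal (abs_nonneg _), abs_of_pos (inv_pos.mpr ha)]
  rw [htr, smul_eq_mul] at h1
  rw [integral_const_mul, ← h1, ← mul_assoc, mul_inv_cancel₀ ha.ne', one_mul]

lemma affIntegral (f : ℝ → ℝ) {a : ℝ} (ha : 0 < a) (b : ℝ) :
    ∫ t, a * f (a * t - b) = ∫ s, f s := by
  have he := affEmb ha.ne' b
  have h1 : ∫ s, f s ∂(Measure.map (fun t : ℝ => a * t - b) volume)
      = ∫ t, f (a * t - b) := he.integral_map f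
  rw [affMap ha.ne', integral_smul_measure] at h1
  have htr : (ENNReal.ofReal |a⁻¹|).toReal = a⁻¹ := by
    rw [ENNReal.toReal_ofReal (abs_nonneg _), abs_of_pos (inv_pos.mpr ha)]
  rw [htr, smul_eq_mul] at h1
  rw [integral_const_mul, ← h1, ← mul_assoc, mul_inv_cancel₀ ha.ne', one_mul]

lemma affIntegrable {f : ℝ → ℝ} (hf : Integrable f) {a : ℝ} (ha : a ≠ 0) (b : ℝ) :
    Integrable (fun t : ℝ => f (a * t - b)) volume := by
  have he := affEmb ha b
  have h : Integrable f (Measure.map (fun t : ℝ => a * t - b) volume) := by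
    rw [affMap ha]
    exact hf.smul_measure ENNReal.ofReal_ne_top
  exact he.integrable_map_iff.mp h

/-- An integrable function whose primitive vanishes identically is a.e. zero. -/
lemma ae_zero_of_integral_Iic_zero {φ : ℝ → ℝ} (hφ : Integrable φ)
    (h : ∀ x : ℝ, ∫ t in Set.Iic x, φ t = 0) :
    ∀ᵐ x ∂(volume : Measure ℝ), φ x = 0 := by
  have hpm : AEMeasurable (fun x => ENNReal.ofReal (φ x)) volume :=
    ENNReal.measurable_ofReal.comp_aemeasurable hφ.aemeasurable
  have hnm : AEMeasurable (fun x => ENNReal.ofReal (-φ x)) volume :=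
    ENNReal.measurable_ofReal.comp_aemeasurable hφ.neg.aemeasurable
  have hμfin : ∫⁻ x, ENNReal.ofReal (φ x) ∂volume ≠ ⊤ := by
    refine ne_top_of_le_ne_top hφ.2.ne (lintegral_mono fun x => ?_)
    rw [Real.enorm_eq_ofReal_abs]
    exact ENNReal.ofReal_le_ofReal (le_abs_self _)
  have hνfin : ∫⁻ x, ENNReal.ofReal (-φ x) ∂volume ≠ ⊤ := by
    refine ne_top_of_le_ne_top hφ.2.ne (lintegral_mono fun x => ?_)
    rw [Real.enorm_eq_ofReal_abs]
    exact ENNReal.ofReal_le_ofReal ((neg_le_abs _))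
  set μ1 := (volume : Measure ℝ).withDensity (fun x => ENNReal.ofReal (φ x)) with hμ1
  set μ2 := (volume : Measure ℝ).withDensity (fun x => ENNReal.ofReal (-φ x)) with hμ2
  haveI : IsFiniteMeasure μ1 := isFiniteMeasure_withDensity hμfin
  haveI : IsFiniteMeasure μ2 := isFiniteMeasure_withDensity hνfin
  have heq : μ1 = μ2 := by
    refine Measure.ext_of_Iic μ1 μ2 fun x => ?_
    rw [hμ1, hμ2, withDensity_apply _ measurableSet_Iic, withDensity_apply _ measurableSet_Iic]
    have hint := integral_eq_lintegral_pos_part_sub_lintegral_neg_part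
      (hφ.restrict (s := Set.Iic x))
    rw [h x] at hint
    have h1 : ∫⁻ t in Set.Iic x, ENNReal.ofReal (φ t) ≠ ⊤ :=
      ne_top_of_le_ne_top hμfin (setLIntegral_le_lintegral _ _)
    have h2 : ∫⁻ t in Set.Iic x, ENNReal.ofReal (-φ t) ≠ ⊤ :=
      ne_top_of_le_ne_top hνfin (setLIntegral_le_lintegral _ _)
    refine (ENNReal.toReal_eq_toReal_iff' h1 h2).mp ?_
    linarith
  have hae := (withDensity_eq_iff hpm hnm hμfin).mp heq
  filter_upwards [hae] with x hx
  by_contra hne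
  rcases lt_trichotomy (φ x) 0 with hlt | h0 | hgt
  · have hz : ENNReal.ofReal (φ x) = 0 := ENNReal.ofReal_eq_zero.mpr hlt.le
    rw [hz] at hx
    have := ENNReal.ofReal_eq_zero.mp hx.symm
    linarith
  · exact hne h0
  · have hz : ENNReal.ofReal (-φ x) = 0 := ENNReal.ofReal_eq_zero.mpr (by linarith)
    rw [hz] at hx
    have := ENNReal.ofReal_eq_zero.mp hx
    linarith

lemma prodNullLemma {Ω : Type*} [MeasurableSpace Ω] (P : Measure Ω) [IsProbabilityMeasure P]
    (L M : Ω → ℝ) (hL : Measurable L) (hM : Measurable M)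
    (hLpos : ∀ᵐ ω ∂P, 0 < L ω)
    {N : Set ℝ} (hNm : MeasurableSet N) (hN : volume N = 0) :
    ∀ᵐ x : ℝ ∂volume, ∀ᵐ ω ∂P, L ω * x - M ω ∉ N := by
  have hmeas1 : Measurable (fun p : Ω × ℝ => L p.1 * p.2 - M p.1) :=
    ((hL.comp measurable_fst).mul measurable_snd).sub (hM.comp measurable_fst)
  have hmS : MeasurableSet {p : Ω × ℝ | L p.1 * p.2 - M p.1 ∈ N} := hmeas1 hNm
  have hPS : (P.prod volume) {p : Ω × ℝ | L p.1 * p.2 - M p.1 ∈ N} = 0 := by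
    rw [Measure.prod_apply hmS]
    have hae : (fun ω => volume (Prod.mk ω ⁻¹' {p : Ω × ℝ | L p.1 * p.2 - M p.1 ∈ N}))
        =ᵐ[P] fun _ => 0 := by
      filter_upwards [hLpos] with ω hω
      have hpre : Prod.mk ω ⁻¹' {p : Ω × ℝ | L p.1 * p.2 - M p.1 ∈ N}
          = (fun x : ℝ => L ω * x - M ω) ⁻¹' N := rfl
      rw [hpre]
      exact affNull hNm hN hω.ne' (M ω)
    rw [lintegral_congr_ae hae, lintegral_zero]
  have hswap : (volume.prod P) {p : ℝ × Ω | L p.2 * p.1 - M p.2 ∈ N} = 0 := by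
    have h1 : Measure.map Prod.swap ((volume : Measure ℝ).prod P) = P.prod volume :=
      Measure.prod_swap
    rw [← h1, Measure.map_apply measurable_swap hmS] at hPS
    have h2 : Prod.swap ⁻¹' {p : Ω × ℝ | L p.1 * p.2 - M p.1 ∈ N}
        = {p : ℝ × Ω | L p.2 * p.1 - M p.2 ∈ N} := rfl
    rwa [h2] at hPS
  have hae : ∀ᵐ p : ℝ × Ω ∂((volume : Measure ℝ).prod P), L p.2 * p.1 - M p.2 ∉ N := by
    rw [ae_iff]
    simpa using hswap
  exact Measure.ae_ae_of_ae_prod hae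

/-- The main statement for strongly measurable `f`. -/
lemma aux_main {Ω : Type*} [MeasurableSpace Ω] (P : Measure Ω) [IsProbabilityMeasure P]
    (L M : Ω → ℝ) (hL : Measurable L) (hM : Measurable M)
    (hLpos : ∀ᵐ ω ∂P, 0 < L ω)
    (g : ℝ → ℝ) (hg : Integrable g)
    (f : ℝ → ℝ) (hfm : StronglyMeasurable f) (hf : Integrable f) :
    (∀ᵐ x : ℝ ∂volume,
        f x = (∫ ω, |L ω| * f (L ω * x - M ω) ∂P) + g x) ↔
    (∀ x : ℝ, (∫ t in Set.Iic x, f t) =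
        (∫ ω, (∫ t in Set.Iic (L ω * x - M ω), f t) ∂P) + ∫ t in Set.Iic x, g t) := by
  have hHmeas : Measurable (fun p : Ω × ℝ => |L p.1| * f (L p.1 * p.2 - M p.1)) :=
    ((hL.comp measurable_fst).abs).mul
      (hfm.measurable.comp
        (((hL.comp measurable_fst).mul measurable_snd).sub (hM.comp measurable_fst)))
  have hHint : Integrable (fun p : Ω × ℝ => |L p.1| * f (L p.1 * p.2 - M p.1))
      (P.prod volume) := by
    refine (integrable_prod_iff hHmeas.aestronglyMeasurable).mpr ⟨?_, ?_⟩
    · filter_upwards [hLpos] with ω hω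
      exact (affIntegrable hf hω.ne' (M ω)).const_mul _
    · refine (integrable_const (∫ t, |f t| ∂volume)).congr ?_
      filter_upwards [hLpos] with ω hω
      have hcg : (fun t : ℝ => ‖|L ω| * f (L ω * t - M ω)‖)
          = fun t : ℝ => L ω * |f (L ω * t - M ω)| := by
        funext t
        rw [Real.norm_eq_abs, abs_mul, abs_abs, abs_of_pos hω]
      calc ∫ t, |f t| ∂volume
          = ∫ t, L ω * |f (L ω * t - M ω)| ∂volume :=
            (affIntegral (fun s => |f s|) hω (M ω)).symm
        _ = ∫ t, ‖|L ω| * f (L ω * t - M ω)‖ ∂volume := by rw [← hcg]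
  have hT : Integrable (fun x : ℝ => ∫ ω, |L ω| * f (L ω * x - M ω) ∂P) volume :=
    hHint.integral_prod_right
  have key : ∀ x : ℝ, ∫ t in Set.Iic x, (∫ ω, |L ω| * f (L ω * t - M ω) ∂P)
      = ∫ ω, (∫ t in Set.Iic (L ω * x - M ω), f t) ∂P := by
    intro x
    have hres : Integrable (fun p : Ω × ℝ => |L p.1| * f (L p.1 * p.2 - M p.1))
        (P.prod (volume.restrict (Set.Iic x))) := by
      have hrw : P.prod (volume.restrict (Set.Iic x))
          = (P.prod volume).restrict (Set.univ ×ˢ Set.Iic x) := by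
        rw [← Measure.prod_restrict, Measure.restrict_univ]
      rw [hrw]
      exact hHint.restrict
    have hswap : ∫ ω, (∫ t in Set.Iic x, |L ω| * f (L ω * t - M ω)) ∂P
        = ∫ t in Set.Iic x, (∫ ω, |L ω| * f (L ω * t - M ω) ∂P) :=
      integral_integral_swap hres
    rw [← hswap]
    refine integral_congr_ae ?_
    filter_upwards [hLpos] with ω hω
    have h1 : (fun t : ℝ => |L ω| * f (L ω * t - M ω))
        = fun t : ℝ => L ω * f (L ω * t - M ω) := by
      funext t; rw [abs_of_pos hω]
    rw [h1]
    exact affSetIntegral f hω (M ω) x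
  constructor
  · intro h x
    have h' : ∀ᵐ t ∂(volume.restrict (Set.Iic x)),
        f t = (∫ ω, |L ω| * f (L ω * t - M ω) ∂P) + g t := ae_restrict_of_ae h
    rw [integral_congr_ae h', integral_add hT.integrableOn hg.integrableOn, key x]
  · intro h
    have hTg : Integrable (fun t : ℝ => (∫ ω, |L ω| * f (L ω * t - M ω) ∂P) + g t) volume :=
      hT.add hg
    have hzero : ∀ x : ℝ,
        ∫ t in Set.Iic x, (f t - ((∫ ω, |L ω| * f (L ω * t - M ω) ∂P) + g t)) = 0 := by
      intro x
      rw [integral_sub hf.integrableOn hTg.integrableOn,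
        integral_add hT.integrableOn hg.integrableOn, key x, h x]
      ring
    have := ae_zero_of_integral_Iic_zero (hf.sub hTg) hzero
    filter_upwards [this] with t ht
    simp only [Pi.sub_apply] at ht
    linarith

end Helpers

/-- **Proposition 3.1.** Assume `L > 0` a.e. Then `f ∈ V_g` iff the
function `F(x) = ∫_{-∞}^x f(t) dt` satisfies
`F(x) = ∫_Ω F(L(ω)x - M(ω)) P(dω) + G(x)` for every `x`, where
`G(x) = ∫_{-∞}^x g(t) dt`. -/
theorem mem_Vg_iff_primitive_solves
    {Ω : Type*} [MeasurableSpace Ω] (P : Measure Ω) [IsProbabilityMeasure P]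
    (L M : Ω → ℝ) (hL : Measurable L) (hM : Measurable M)
    (hLpos : ∀ᵐ ω ∂P, 0 < L ω)
    (g : ℝ → ℝ) (hg : Integrable g)
    (f : ℝ → ℝ) (hf : Integrable f) :
    (∀ᵐ x : ℝ ∂volume,
        f x = (∫ ω, |L ω| * f (L ω * x - M ω) ∂P) + g x) ↔
    (∀ x : ℝ, (∫ t in Set.Iic x, f t) =
        (∫ ω, (∫ t in Set.Iic (L ω * x - M ω), f t) ∂P) + ∫ t in Set.Iic x, g t) := by
  set f' := hf.1.mk f with hf'def
  have hf'sm : StronglyMeasurable f' := hf.1.stronglyMeasurable_mk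
  have hff' : f =ᵐ[volume] f' := hf.1.ae_eq_mk
  have hf' : Integrable f' := hf.congr hff'
  have hRHS : ∀ y : ℝ, (∫ t in Set.Iic y, f t) = ∫ t in Set.Iic y, f' t :=
    fun y => integral_congr_ae (ae_restrict_of_ae hff')
  obtain ⟨N, hNsub, hNm, hN0⟩ :=
    exists_measurable_superset_of_null (ae_iff.mp hff')
  have hae2 : ∀ᵐ x ∂(volume : Measure ℝ),
      (∫ ω, |L ω| * f (L ω * x - M ω) ∂P) = ∫ ω, |L ω| * f' (L ω * x - M ω) ∂P := by
    filter_upwards [prodNullLemma P L M hL hM hLpos hNm hN0] with x hx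
    refine integral_congr_ae ?_
    filter_upwards [hx] with ω hω
    have heq : f (L ω * x - M ω) = f' (L ω * x - M ω) := by
      by_contra hc
      exact hω (hNsub hc)
    rw [heq]
  have haux := aux_main P L M hL hM hLpos g hg f' hf'sm hf'
  have hiffR : (∀ x : ℝ, (∫ t in Set.Iic x, f t) =
        (∫ ω, (∫ t in Set.Iic (L ω * x - M ω), f t) ∂P) + ∫ t in Set.Iic x, g t) ↔
      (∀ x : ℝ, (∫ t in Set.Iic x, f' t) =
        (∫ ω, (∫ t in Set.Iic (L ω * x - M ω), f' t) ∂P) + ∫ t in Set.Iic x, g t) := by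
    simp only [hRHS]
  have hiffL : (∀ᵐ x : ℝ ∂volume,
        f x = (∫ ω, |L ω| * f (L ω * x - M ω) ∂P) + g x) ↔
      (∀ᵐ x : ℝ ∂volume,
        f' x = (∫ ω, |L ω| * f' (L ω * x - M ω) ∂P) + g x) := by
    constructor
    · intro h
      filter_upwards [h, hff', hae2] with t h1 h2 h3
      rw [← h2, ← h3]
      exact h1
    · intro h
      filter_upwards [h, hff', hae2] with t h1 h2 h3
      rw [h2, h3]
      exact h1
  rw [hiffL, hiffR]
  exact haux
end

section
/- (Lemma 3.3) Assume L(ω) > 0 for P-almost all ω, M is P-integrable, and ∫_Ω L(ω) P(dω) < 1. Let G : ℝ → ℝ be Lipschitz and suppose there exists x₀ ∈ ℝ such that lim_{n→∞} ∫_{Ω^∞} G(φ^n(x₀, ϖ)) P^∞(dϖ) = 0. Then there exists a Lipschitz function F : ℝ → ℝ satisfying F(x) = ∫_Ω F(L(ω)x − M(ω)) P(dω) + G(x) for every x ∈ ℝ. -/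
open MeasureTheory Filter Topology

/-- Iterates of the random affine map `φ(x, ω) = L(ω)x - M(ω)`: with
`ϖ = (ω₁, ω₂, …)` written as `ϖ : ℕ → Ω` (so `ω_{n+1} = ϖ n`), we have
`φ⁰(x, ϖ) = x`, `φ¹(x, ϖ) = φ(x, ω₁)` and `φ^{n+1}(x, ϖ) = φ(φⁿ(x, ϖ), ω_{n+1})`. -/
def phiIter {Ω : Type*} (L M : Ω → ℝ) (ϖ : ℕ → Ω) (x : ℝ) : ℕ → ℝ
  | 0 => x
  | n + 1 => L (ϖ n) * phiIter L M ϖ x n - M (ϖ n)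

noncomputable def uSeq {Ω : Type*} [MeasurableSpace Ω] (P : Measure Ω) (L M : Ω → ℝ)
    (G : ℝ → ℝ) : ℕ → ℝ → ℝ
  | 0 => G
  | n + 1 => fun x => ∫ ω, uSeq P L M G n (L ω * x - M ω) ∂P

def finPhi {Ω : Type*} (L M : Ω → ℝ) : (n : ℕ) → (Fin n → Ω) → ℝ → ℝ
  | 0, _, x => x
  | n + 1, v, x => L (v (Fin.last n)) * finPhi L M n (fun i => v i.castSucc) x
      - M (v (Fin.last n))

lemma finPhi_succ_left {Ω : Type*} (L M : Ω → ℝ) :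
    ∀ (n : ℕ) (v : Fin (n + 1) → Ω) (x : ℝ),
      finPhi L M (n + 1) v x = finPhi L M n (fun i => v i.succ) (L (v 0) * x - M (v 0)) := by
  intro n
  induction n with
  | zero => intro v x; rfl
  | succ n ih =>
    intro v x
    show L (v (Fin.last (n+1))) * finPhi L M (n+1) (fun i => v i.castSucc) x
        - M (v (Fin.last (n+1))) = _
    rw [ih]
    show _ = L ((fun i => v i.succ) (Fin.last n)) *
        finPhi L M n (fun i => (fun i => v i.succ) i.castSucc) (L (v 0) * x - M (v 0))
        - M ((fun i => v i.succ) (Fin.last n))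
    simp only [Fin.succ_last, Fin.castSucc_zero, Fin.succ_castSucc]

lemma phiIter_eq_finPhi {Ω : Type*} (L M : Ω → ℝ) (ϖ : ℕ → Ω) (x : ℝ) :
    ∀ n, phiIter L M ϖ x n = finPhi L M n (fun i => ϖ i) x := by
  intro n
  induction n with
  | zero => rfl
  | succ n ih =>
    show L (ϖ n) * phiIter L M ϖ x n - M (ϖ n) = _
    rw [ih]
    show _ = L (ϖ (Fin.last n)) * finPhi L M n (fun i : Fin n => ϖ (Fin.castSucc i)) x
        - M (ϖ (Fin.last n))
    simp [Fin.val_last, Fin.coe_castSucc]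

lemma measurable_finPhi {Ω : Type*} [MeasurableSpace Ω] {L M : Ω → ℝ}
    (hL : Measurable L) (hM : Measurable M) :
    ∀ n, Measurable fun p : (Fin n → Ω) × ℝ => finPhi L M n p.1 p.2 := by
  intro n
  induction n with
  | zero => exact measurable_snd
  | succ n ih =>
    have h1 : Measurable fun p : (Fin (n+1) → Ω) × ℝ => p.1 (Fin.last n) :=
      (measurable_pi_apply _).comp measurable_fst
    have hmap : Measurable fun p : (Fin (n+1) → Ω) × ℝ =>
        ((fun i : Fin n => p.1 i.castSucc, p.2) : (Fin n → Ω) × ℝ) :=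
      (measurable_pi_lambda _ fun i =>
        (measurable_pi_apply _).comp measurable_fst).prodMk measurable_snd
    have h2 : Measurable fun p : (Fin (n+1) → Ω) × ℝ =>
        finPhi L M n (fun i => p.1 i.castSucc) p.2 := ih.comp hmap
    exact ((hL.comp h1).mul h2).sub (hM.comp h1)

/-- **Lemma 3.3.** Assume `L > 0` a.e., `M` integrable and
`∫ L dP < 1`. If `G : ℝ → ℝ` is Lipschitz and there is `x₀` with
`lim_{n→∞} ∫_{Ω^∞} G(φⁿ(x₀, ϖ)) P^∞(dϖ) = 0`, then the equation
`F(x) = ∫_Ω F(L(ω)x - M(ω)) P(dω) + G(x)` has a Lipschitz solution `F : ℝ → ℝ`. -/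
theorem exists_lipschitz_solution_of_iterates_tendsto_zero
    {Ω : Type*} [MeasurableSpace Ω] (P : Measure Ω) [IsProbabilityMeasure P]
    (L M : Ω → ℝ) (hL : Measurable L) (hM : Measurable M)
    (Pinf : Measure (ℕ → Ω)) [IsProbabilityMeasure Pinf]
    (hprod : ∀ (n : ℕ) (A : ℕ → Set Ω), (∀ i, MeasurableSet (A i)) →
      Pinf {ϖ | ∀ i < n, ϖ i ∈ A i} = ∏ i ∈ Finset.range n, P (A i))
    (hLpos : ∀ᵐ ω ∂P, 0 < L ω)
    (hMint : Integrable M P)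
    (hLint : Integrable L P) (hLlt : ∫ ω, L ω ∂P < 1)
    (G : ℝ → ℝ) (hGLip : ∃ K : NNReal, LipschitzWith K G)
    (hx₀ : ∃ x₀ : ℝ,
      Tendsto (fun n : ℕ => ∫ ϖ, G (phiIter L M ϖ x₀ n) ∂Pinf) atTop (𝓝 0)) :
    ∃ F : ℝ → ℝ, (∃ K : NNReal, LipschitzWith K F) ∧
      ∀ x : ℝ, F x = (∫ ω, F (L ω * x - M ω) ∂P) + G x := by
  obtain ⟨K, hK⟩ := hGLip
  obtain ⟨x₀, hx₀⟩ := hx₀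
  set α : ℝ := ∫ ω, L ω ∂P with hα
  have hα0 : 0 ≤ α := integral_nonneg_of_ae (hLpos.mono fun ω h => h.le)
  have hα1 : α < 1 := hLlt
  have hLabsint : ∫ ω, |L ω| ∂P = α :=
    integral_congr_ae (hLpos.mono fun ω h => abs_of_pos h)
  have hk0 : (0:ℝ) ≤ (K:ℝ) := K.2
  have hGlipR : ∀ a b, |G a - G b| ≤ (K:ℝ) * |a - b| := fun a b => by
    have := hK.dist_le_mul a b
    rwa [Real.dist_eq, Real.dist_eq] at this
  -- continuity from a real Lipschitz bound
  have contOf : ∀ (C : ℝ) (f : ℝ → ℝ), (∀ a b, |f a - f b| ≤ C * |a - b|) → Continuous f := by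
    intro C f hf
    refine (LipschitzWith.of_dist_le_mul (K := C.toNNReal) fun a b => ?_).continuous
    rw [Real.dist_eq, Real.dist_eq]
    exact (hf a b).trans (mul_le_mul_of_nonneg_right (Real.le_coe_toNNReal C) (abs_nonneg _))
  -- integrability of Lipschitz functions composed with the affine map
  have integOf : ∀ (C : ℝ) (f : ℝ → ℝ), (∀ a b, |f a - f b| ≤ C * |a - b|) →
      ∀ x, Integrable (fun ω => f (L ω * x - M ω)) P := by
    intro C f hf x
    have hcont := contOf C f hf
    have hmeas : AEStronglyMeasurable (fun ω => f (L ω * x - M ω)) P :=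
      (hcont.measurable.comp ((hL.mul_const x).sub hM)).aestronglyMeasurable
    refine Integrable.mono' (g := fun ω => |f 0| + C * (|L ω| * |x| + |M ω|))
      ?_ hmeas (ae_of_all _ fun ω => ?_)
    · exact (integrable_const _).add (((hLint.abs.mul_const _).add hMint.abs).const_mul C)
    · have h1 : |f (L ω * x - M ω)| ≤ |f 0| + |f (L ω * x - M ω) - f 0| := by
        have := abs_add_le (f 0) (f (L ω * x - M ω) - f 0)
        simpa using this
      have h2 : |f (L ω * x - M ω) - f 0| ≤ C * |L ω * x - M ω| := by
        simpa using hf (L ω * x - M ω) 0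
      have h3 : |L ω * x - M ω| ≤ |L ω| * |x| + |M ω| := by
        calc |L ω * x - M ω| ≤ |L ω * x| + |M ω| := abs_sub _ _
          _ = |L ω| * |x| + |M ω| := by rw [abs_mul]
      have hC0 : 0 ≤ C := by
        have := hf 1 0
        simp at this
        nlinarith [abs_nonneg (f 1 - f 0)]
      calc ‖f (L ω * x - M ω)‖ = |f (L ω * x - M ω)| := rfl
        _ ≤ |f 0| + C * |L ω * x - M ω| := by linarith
        _ ≤ |f 0| + C * (|L ω| * |x| + |M ω|) := by nlinarith
  -- Lipschitz bound for the iterated means, for any K-Lipschitz G'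
  have lipOf : ∀ (G' : ℝ → ℝ), (∀ a b, |G' a - G' b| ≤ (K:ℝ) * |a - b|) →
      ∀ n x y, |uSeq P L M G' n x - uSeq P L M G' n y| ≤ (K:ℝ) * α ^ n * |x - y| := by
    intro G' hG' n
    induction n with
    | zero => intro x y; simpa [uSeq] using hG' x y
    | succ n ih =>
      intro x y
      have hI := integOf ((K:ℝ) * α ^ n) _ ih
      show |(∫ ω, uSeq P L M G' n (L ω * x - M ω) ∂P)
          - ∫ ω, uSeq P L M G' n (L ω * y - M ω) ∂P| ≤ _
      rw [← integral_sub (hI x) (hI y)]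
      have hb : |∫ ω, (uSeq P L M G' n (L ω * x - M ω) - uSeq P L M G' n (L ω * y - M ω)) ∂P|
          ≤ ∫ ω, ((K:ℝ) * α ^ n * |x - y|) * |L ω| ∂P := by
        refine (norm_integral_le_integral_norm (fun ω => uSeq P L M G' n (L ω * x - M ω) - uSeq P L M G' n (L ω * y - M ω))).trans ?_
        refine integral_mono_of_nonneg (ae_of_all _ fun ω => norm_nonneg _)
          (hLint.abs.const_mul _) (ae_of_all _ fun ω => ?_)
        have := ih (L ω * x - M ω) (L ω * y - M ω)
        have he : (L ω * x - M ω) - (L ω * y - M ω) = L ω * (x - y) := by ring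
        rw [he, abs_mul] at this
        calc ‖uSeq P L M G' n (L ω * x - M ω) - uSeq P L M G' n (L ω * y - M ω)‖
            = |uSeq P L M G' n (L ω * x - M ω) - uSeq P L M G' n (L ω * y - M ω)| := rfl
          _ ≤ (K:ℝ) * α ^ n * (|L ω| * |x - y|) := this
          _ = ((K:ℝ) * α ^ n * |x - y|) * |L ω| := by ring
      have hc : ∫ ω, ((K:ℝ) * α ^ n * |x - y|) * |L ω| ∂P
          = ((K:ℝ) * α ^ n * |x - y|) * α := by
        rw [integral_const_mul, hLabsint]
      rw [hc] at hb
      calc |∫ ω, (uSeq P L M G' n (L ω * x - M ω) - uSeq P L M G' n (L ω * y - M ω)) ∂P|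
          ≤ ((K:ℝ) * α ^ n * |x - y|) * α := hb
        _ = (K:ℝ) * α ^ (n + 1) * |x - y| := by ring
  -- pushforward of Pinf along the first n coordinates is the product measure
  have hmap : ∀ n : ℕ, Pinf.map (fun ϖ (i : Fin n) => ϖ i) = Measure.pi (fun _ : Fin n => P) := by
    intro n
    refine (Measure.pi_eq fun s hs => ?_).symm
    have hmeasproj : Measurable fun (ϖ : ℕ → Ω) (i : Fin n) => ϖ i :=
      measurable_pi_lambda _ fun i => measurable_pi_apply _
    rw [Measure.map_apply hmeasproj (MeasurableSet.univ_pi hs)]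
    classical
    have hA : ∀ i : ℕ, MeasurableSet (if h : i < n then s ⟨i, h⟩ else Set.univ) := by
      intro i
      split
      · exact hs _
      · exact MeasurableSet.univ
    have hp := hprod n _ hA
    have hset : ((fun ϖ (i : Fin n) => ϖ i) ⁻¹' Set.pi Set.univ s)
        = {ϖ : ℕ → Ω | ∀ i < n, ϖ i ∈ if h : i < n then s ⟨i, h⟩ else Set.univ} := by
      ext ϖ
      simp only [Set.mem_preimage, Set.mem_pi, Set.mem_univ, forall_true_left, Set.mem_setOf_eq,
        true_implies]
      constructor
      · intro h i hi
        rw [dif_pos hi]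
        exact h ⟨i, hi⟩
      · intro h i
        have := h i.1 i.2
        rwa [dif_pos i.2] at this
    rw [hset, hp, ← Fin.prod_univ_eq_prod_range
      (fun i => P (if h : i < n then s ⟨i, h⟩ else Set.univ)) n]
    refine Finset.prod_congr rfl fun i _ => ?_
    rw [dif_pos i.isLt]
  -- identification of the iterated means with integrals over the product measure
  have hiter : ∀ n : ℕ, ∀ (G' : ℝ → ℝ), (∀ a b, |G' a - G' b| ≤ (K:ℝ) * |a - b|) → ∀ x,
      Integrable (fun v : Fin n → Ω => G' (finPhi L M n v x)) (Measure.pi fun _ : Fin n => P) ∧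
      ∫ v : Fin n → Ω, G' (finPhi L M n v x) ∂(Measure.pi fun _ : Fin n => P)
        = uSeq P L M G' n x := by
    intro n
    induction n with
    | zero =>
      intro G' hG' x
      constructor
      · have : (fun v : Fin 0 → Ω => G' (finPhi L M 0 v x)) = fun _ => G' x := rfl
        rw [this]
        exact integrable_const _
      · simp [uSeq, finPhi]
    | succ n ih =>
      intro G' hG' x
      have hcontG' : Continuous G' := contOf _ G' hG'
      set ν : Measure (Fin n → Ω) := Measure.pi (fun _ : Fin n => P) with hν
      have mp := measurePreserving_piFinSuccAbove (fun _ : Fin (n+1) => P) 0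
      set g : Ω × (Fin n → Ω) → ℝ :=
        fun q => G' (finPhi L M n q.2 (L q.1 * x - M q.1)) with hgdef
      have hgm : Measurable g := by
        have hh : Measurable fun q : Ω × (Fin n → Ω) => finPhi L M n q.2 (L q.1 * x - M q.1) := by
          have hq : Measurable fun q : Ω × (Fin n → Ω) =>
              ((q.2, L q.1 * x - M q.1) : (Fin n → Ω) × ℝ) :=
            measurable_snd.prodMk (((hL.comp measurable_fst).mul_const x).sub
              (hM.comp measurable_fst))
          exact (measurable_finPhi hL hM n).comp hq
        exact hcontG'.measurable.comp hh
      have habs : ∀ a b, |(|G' a|) - (|G' b|)| ≤ (K:ℝ) * |a - b| := fun a b =>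
        (abs_abs_sub_abs_le_abs_sub _ _).trans (hG' a b)
      have hginteg : Integrable g (P.prod ν) := by
        rw [integrable_prod_iff hgm.aestronglyMeasurable]
        constructor
        · exact ae_of_all _ fun ω => (ih G' hG' (L ω * x - M ω)).1
        · have he : (fun ω => ∫ w, ‖g (ω, w)‖ ∂ν)
              = fun ω => uSeq P L M (fun z => |G' z|) n (L ω * x - M ω) := by
            funext ω
            rw [← (ih (fun z => |G' z|) habs (L ω * x - M ω)).2]
            rfl
          rw [he]
          exact integOf ((K:ℝ) * α ^ n) _ (lipOf (fun z => |G' z|) habs n) x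
      have hcomp : ∀ v : Fin (n+1) → Ω,
          g (MeasurableEquiv.piFinSuccAbove (fun _ : Fin (n+1) => Ω) 0 v)
            = G' (finPhi L M (n+1) v x) := by
        intro v
        rw [finPhi_succ_left]
        simp only [hgdef, MeasurableEquiv.piFinSuccAbove_apply, Fin.zero_succAbove,
          Fin.insertNthEquiv, Equiv.coe_fn_symm_mk]
        rfl
      constructor
      · have h1 : Integrable (g ∘ (MeasurableEquiv.piFinSuccAbove (fun _ : Fin (n+1) => Ω) 0))
            (Measure.pi fun _ : Fin (n+1) => P) :=
          (mp.integrable_comp_emb (MeasurableEquiv.measurableEmbedding _)).mpr hginteg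
        exact h1.congr (ae_of_all _ fun v => hcomp v)
      · calc ∫ v : Fin (n+1) → Ω, G' (finPhi L M (n+1) v x)
              ∂(Measure.pi fun _ : Fin (n+1) => P)
            = ∫ v : Fin (n+1) → Ω,
                g (MeasurableEquiv.piFinSuccAbove (fun _ : Fin (n+1) => Ω) 0 v)
                ∂(Measure.pi fun _ : Fin (n+1) => P) := by
              exact integral_congr_ae (ae_of_all _ fun v => (hcomp v).symm)
          _ = ∫ q, g q ∂(P.prod ν) := mp.integral_comp' g
          _ = ∫ ω, ∫ w, g (ω, w) ∂ν ∂P := integral_prod g hginteg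
          _ = ∫ ω, uSeq P L M G' n (L ω * x - M ω) ∂P := by
              refine integral_congr_ae (ae_of_all _ fun ω => ?_)
              exact (ih G' hG' (L ω * x - M ω)).2
          _ = uSeq P L M G' (n + 1) x := rfl
  set u : ℕ → ℝ → ℝ := uSeq P L M G with hu
  -- identify u n x with the Pinf-integral of G along the iterates
  have hidp : ∀ n x, ∫ ϖ, G (phiIter L M ϖ x n) ∂Pinf = u n x := by
    intro n x
    have hcontG : Continuous G := hK.continuous
    have hfm : Measurable fun v : Fin n → Ω => G (finPhi L M n v x) := by
      have hq : Measurable fun v : Fin n → Ω => ((v, x) : (Fin n → Ω) × ℝ) :=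
        measurable_id.prodMk measurable_const
      exact hcontG.measurable.comp ((measurable_finPhi hL hM n).comp hq)
    have hmeasproj : Measurable fun (ϖ : ℕ → Ω) (i : Fin n) => ϖ i :=
      measurable_pi_lambda _ fun i => measurable_pi_apply _
    calc ∫ ϖ, G (phiIter L M ϖ x n) ∂Pinf
        = ∫ ϖ, G (finPhi L M n (fun i : Fin n => ϖ i) x) ∂Pinf := by
          exact integral_congr_ae (ae_of_all _ fun ϖ =>
            congrArg G (phiIter_eq_finPhi L M ϖ x n))
      _ = ∫ v : Fin n → Ω, G (finPhi L M n v x)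
            ∂(Pinf.map (fun ϖ (i : Fin n) => ϖ i)) := by
          rw [integral_map hmeasproj.aemeasurable]
          rw [hmap n]
          exact hfm.aestronglyMeasurable
      _ = ∫ v : Fin n → Ω, G (finPhi L M n v x) ∂(Measure.pi fun _ : Fin n => P) := by
          rw [hmap n]
      _ = u n x := (hiter n G hGlipR x).2
  have hU0 : Tendsto (fun n => u n x₀) atTop (𝓝 0) := by
    have he : (fun n : ℕ => ∫ ϖ, G (phiIter L M ϖ x₀ n) ∂Pinf) = fun n => u n x₀ :=
      funext fun n => hidp n x₀
    rwa [he] at hx₀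
  have hulip : ∀ n x y, |u n x - u n y| ≤ (K:ℝ) * α ^ n * |x - y| := lipOf G hGlipR
  have huint : ∀ n x, Integrable (fun ω => u n (L ω * x - M ω)) P := fun n =>
    integOf ((K:ℝ) * α ^ n) _ (hulip n)
  have hgeo : Summable fun n : ℕ => α ^ n := summable_geometric_of_lt_one hα0 hα1
  have hpow0 : Tendsto (fun n : ℕ => α ^ n) atTop (𝓝 0) :=
    tendsto_pow_atTop_nhds_zero_of_lt_one hα0 hα1
  have hU0x : ∀ x, Tendsto (fun n => u n x) atTop (𝓝 0) := by
    intro x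
    have h1 : Tendsto (fun n => u n x - u n x₀) atTop (𝓝 0) := by
      have hg0 : Tendsto (fun n : ℕ => ((K:ℝ) * |x - x₀|) * α ^ n) atTop (𝓝 0) := by
        have := hpow0.const_mul ((K:ℝ) * |x - x₀|)
        simpa using this
      refine squeeze_zero_norm (a := fun n : ℕ => ((K:ℝ) * |x - x₀|) * α ^ n)
        (fun n => ?_) hg0
      exact (hulip n x x₀).trans_eq (by ring)
    have := h1.add hU0
    simpa using this
  have hsum : ∀ x y, Summable fun n => u n x - u n y := by
    intro x y
    refine Summable.of_norm_bounded (g := fun n => ((K:ℝ) * |x - y|) * α ^ n)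
      (hgeo.mul_left _) fun n => ?_
    rw [Real.norm_eq_abs]
    exact (hulip n x y).trans_eq (by ring)
  set F : ℝ → ℝ := fun x => ∑' n, (u n x - u n x₀) with hF
  have hFlip : ∀ x y, |F x - F y| ≤ ((K:ℝ) * (1 - α)⁻¹) * |x - y| := by
    intro x y
    have h1 : F x - F y = ∑' n, (u n x - u n y) := by
      rw [hF, ← Summable.tsum_sub (hsum x x₀) (hsum y x₀)]
      congr 1
      funext n
      ring
    rw [h1]
    have hgs : HasSum (fun n : ℕ => ((K:ℝ) * |x - y|) * α ^ n)
        (((K:ℝ) * |x - y|) * (1 - α)⁻¹) :=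
      (hasSum_geometric_of_lt_one hα0 hα1).mul_left _
    have h2 : ‖∑' n, (u n x - u n y)‖ ≤ ((K:ℝ) * |x - y|) * (1 - α)⁻¹ := by
      refine tsum_of_norm_bounded hgs fun n => ?_
      rw [Real.norm_eq_abs]
      exact (hulip n x y).trans_eq (by ring)
    rw [Real.norm_eq_abs] at h2
    exact h2.trans_eq (by ring)
  have heq : ∀ x, F x = (∫ ω, F (L ω * x - M ω) ∂P) + G x := by
    intro x
    set b : ℕ → ℝ := fun n => ∫ ω, (u n (L ω * x - M ω) - u n x₀) ∂P with hb
    have hfint : ∀ n, Integrable (fun ω => u n (L ω * x - M ω) - u n x₀) P := fun n =>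
      (huint n x).sub (integrable_const _)
    have hDint : Integrable (fun ω => |L ω * x - M ω - x₀|) P :=
      (((hLint.mul_const x).sub hMint).sub (integrable_const x₀)).abs
    set D : ℝ := ∫ ω, |L ω * x - M ω - x₀| ∂P with hD
    have hnormb : ∀ n, ∫ ω, ‖u n (L ω * x - M ω) - u n x₀‖ ∂P ≤ ((K:ℝ) * D) * α ^ n := by
      intro n
      have h1 : ∫ ω, ‖u n (L ω * x - M ω) - u n x₀‖ ∂P
          ≤ ∫ ω, ((K:ℝ) * α ^ n) * |L ω * x - M ω - x₀| ∂P := by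
        refine integral_mono_of_nonneg (ae_of_all _ fun ω => norm_nonneg _)
          (hDint.const_mul _) (ae_of_all _ fun ω => ?_)
        have := hulip n (L ω * x - M ω) x₀
        calc ‖u n (L ω * x - M ω) - u n x₀‖
            = |u n (L ω * x - M ω) - u n x₀| := rfl
          _ ≤ (K:ℝ) * α ^ n * |L ω * x - M ω - x₀| := this
      rw [integral_const_mul] at h1
      exact h1.trans_eq (by rw [← hD]; ring)
    have hnorm_sum : Summable fun n => ∫ ω, ‖u n (L ω * x - M ω) - u n x₀‖ ∂P := by
      refine Summable.of_nonneg_of_le (fun n => integral_nonneg fun ω => norm_nonneg _)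
        hnormb (hgeo.mul_left _)
    have hbsum : Summable b := by
      refine Summable.of_norm_bounded (g := fun n => ((K:ℝ) * D) * α ^ n)
        (hgeo.mul_left _) fun n => ?_
      exact (norm_integral_le_integral_norm _).trans (hnormb n)
    have hswap : ∑' n, b n = ∫ ω, F (L ω * x - M ω) ∂P :=
      integral_tsum_of_summable_integral_norm hfint hnorm_sum
    have hbn : ∀ n, b n = u (n + 1) x - u n x₀ := by
      intro n
      simp only [hb]
      rw [integral_sub (huint n x) (integrable_const _), integral_const]
      simp [measure_univ]
      rfl
    set t : ℕ → ℝ := fun n => u n x - u (n + 1) x with ht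
    have htsum : Summable t := by
      have he : t = fun n => (u n x - u n x₀) - b n := by
        funext n
        rw [hbn]
        ring
      rw [he]
      exact (hsum x x₀).sub hbsum
    have htel : ∑' n, t n = G x := by
      have h1 : Tendsto (fun N => ∑ n ∈ Finset.range N, t n) atTop (𝓝 (∑' n, t n)) :=
        htsum.hasSum.tendsto_sum_nat
      have h2 : ∀ N, ∑ n ∈ Finset.range N, t n = u 0 x - u N x := fun N =>
        Finset.sum_range_sub' (fun n => u n x) N
      have h3 : Tendsto (fun N => u 0 x - u N x) atTop (𝓝 (u 0 x - 0)) :=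
        tendsto_const_nhds.sub (hU0x x)
      have h4 := tendsto_nhds_unique (funext h2 ▸ h1) h3
      rw [h4]
      simp [hu, uSeq]
    have h5 : ∀ n : ℕ, u n x - u n x₀ = t n + b n := by
      intro n
      simp only [ht]
      rw [hbn n]
      ring
    have h5' : F x = ∑' n, (t n + b n) := by
      show (∑' n, (u n x - u n x₀)) = _
      exact tsum_congr h5
    rw [h5', Summable.tsum_add htsum hbsum, htel, hswap]
    ring
  refine ⟨F, ⟨((K:ℝ) * (1 - α)⁻¹).toNNReal, ?_⟩, heq⟩
  refine LipschitzWith.of_dist_le_mul fun x y => ?_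
  rw [Real.dist_eq, Real.dist_eq]
  exact (hFlip x y).trans
    (mul_le_mul_of_nonneg_right (Real.le_coe_toNNReal _) (abs_nonneg _))
end

section
/- (Example 3.4) There exists a bounded Lipschitz function F : ℝ → ℝ for which there is no f ∈ L¹(ℝ) satisfying F(x) = ∫_{−∞}^x f(t) dt for every x ∈ ℝ. In particular, the function F(x) = ∫_{−∞}^x h(t) dt defined as an improper Riemann integral, where h(x) = 1/(n+1) for x ∈ (−2n−1, −2n], h(x) = −1/(n+1) for x ∈ (−2n−2, −2n−1] (n = 0, 1, 2, …), and h(x) = 0 for x > 0, is bounded and Lipschitz, and admits no such representation. -/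
open MeasureTheory Filter Topology

/-- The function `h` of Example 3.4: `h(x) = 1/(n+1)` for `x ∈ (-2n-1, -2n]`,
`h(x) = -1/(n+1)` for `x ∈ (-2n-2, -2n-1]` (`n = 0, 1, 2, …`), and `h(x) = 0`
for `x > 0`. -/
noncomputable def hstep (x : ℝ) : ℝ :=
  if 0 < x then 0
  else if -x - 2 * (⌊-x / 2⌋₊ : ℝ) < 1 then 1 / ((⌊-x / 2⌋₊ : ℝ) + 1)
  else -(1 / ((⌊-x / 2⌋₊ : ℝ) + 1))

lemma hstep_meas : Measurable hstep := by
  unfold hstep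
  have hfl : Measurable fun x : ℝ => (⌊-x / 2⌋₊ : ℝ) :=
    measurable_from_nat.comp (Nat.measurable_floor.comp ((measurable_id.neg).div_const 2))
  apply Measurable.ite (measurableSet_lt measurable_const measurable_id) measurable_const
  apply Measurable.ite
  · exact measurableSet_lt ((measurable_id.neg).sub (hfl.const_mul 2)) measurable_const
  · exact (measurable_const.div (hfl.add_const 1))
  · exact ((measurable_const.div (hfl.add_const 1))).neg

lemma abs_hstep_le (x : ℝ) : |hstep x| ≤ 1 := by
  unfold hstep
  have h1 : (0:ℝ) < (⌊-x / 2⌋₊ : ℝ) + 1 := by positivity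
  have h2 : (1:ℝ) / ((⌊-x / 2⌋₊ : ℝ) + 1) ≤ 1 := by
    rw [div_le_one h1]; linarith [Nat.cast_nonneg (α := ℝ) ⌊-x/2⌋₊]
  have h3 : |1 / ((⌊-x / 2⌋₊ : ℝ) + 1)| ≤ 1 := by
    rw [abs_of_nonneg (by positivity)]; exact h2
  split_ifs <;> simpa [abs_neg, one_div] using h3

lemma hstep_intInt (a b : ℝ) : IntervalIntegrable hstep volume a b := by
  rw [intervalIntegrable_iff]
  apply Measure.integrableOn_of_bounded (M := 1) (by exact measure_Ioc_lt_top.ne) hstep_meas.aestronglyMeasurable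
  exact Eventually.of_forall fun x => by simpa using abs_hstep_le x

lemma hstep_eq_pos (n : ℕ) {x : ℝ} (h1 : -2*(n:ℝ) - 1 < x) (h2 : x ≤ -2*(n:ℝ)) :
    hstep x = 1 / ((n:ℝ) + 1) := by
  have hn : (0:ℝ) ≤ (n:ℝ) := Nat.cast_nonneg n
  have hfl : ⌊-x / 2⌋₊ = n := by
    rw [Nat.floor_eq_iff (by linarith)]
    constructor
    · push_cast; linarith
    · push_cast; linarith
  rw [hstep, if_neg (by linarith), hfl, if_pos (by push_cast; linarith)]

lemma hstep_eq_neg (n : ℕ) {x : ℝ} (h1 : -2*(n:ℝ) - 2 < x) (h2 : x ≤ -2*(n:ℝ) - 1) :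
    hstep x = -(1 / ((n:ℝ) + 1)) := by
  have hn : (0:ℝ) ≤ (n:ℝ) := Nat.cast_nonneg n
  have hfl : ⌊-x / 2⌋₊ = n := by
    rw [Nat.floor_eq_iff (by linarith)]
    constructor
    · push_cast; linarith
    · push_cast; linarith
  rw [hstep, if_neg (by linarith), hfl, if_neg (by push_cast; linarith)]

lemma integral_pos_piece (n : ℕ) :
    ∫ t in (-2*(n:ℝ) - 1)..(-2*(n:ℝ)), hstep t = 1 / ((n:ℝ) + 1) := by
  have hle : (-2*(n:ℝ) - 1) ≤ -2*(n:ℝ) := by linarith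
  rw [intervalIntegral.integral_of_le hle,
    setIntegral_congr_fun measurableSet_Ioc
      (fun x hx => hstep_eq_pos n hx.1 hx.2), setIntegral_const, measureReal_def, Real.volume_Ioc,
    ENNReal.toReal_ofReal (by linarith), show -2*(n:ℝ) - (-2*(n:ℝ)-1) = 1 by ring, one_smul]

lemma integral_neg_piece (n : ℕ) :
    ∫ t in (-2*(n:ℝ) - 2)..(-2*(n:ℝ) - 1), hstep t = -(1 / ((n:ℝ) + 1)) := by
  have hle : (-2*(n:ℝ) - 2) ≤ -2*(n:ℝ) - 1 := by linarith
  rw [intervalIntegral.integral_of_le hle,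
    setIntegral_congr_fun measurableSet_Ioc
      (fun x hx => hstep_eq_neg n hx.1 hx.2), setIntegral_const, measureReal_def, Real.volume_Ioc,
    ENNReal.toReal_ofReal (by linarith), show -2*(n:ℝ)-1 - (-2*(n:ℝ)-2) = 1 by ring, one_smul]

lemma integral_period (n : ℕ) :
    ∫ t in (-2*(n:ℝ) - 2)..(-2*(n:ℝ)), hstep t = 0 := by
  rw [← intervalIntegral.integral_add_adjacent_intervals
    (hstep_intInt _ (-2*(n:ℝ) - 1)) (hstep_intInt _ _),
    integral_pos_piece, integral_neg_piece]
  ring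

lemma integral_even (n k : ℕ) :
    ∫ t in (-2*((n+k : ℕ):ℝ))..(-2*(n:ℝ)), hstep t = 0 := by
  induction k with
  | zero => simp
  | succ k ih =>
    have key : ∫ t in (-2*((n+(k+1) : ℕ):ℝ))..(-2*((n+k : ℕ):ℝ)), hstep t = 0 := by
      have : (-2*((n+(k+1) : ℕ):ℝ)) = -2*((n+k : ℕ):ℝ) - 2 := by push_cast; ring
      rw [this]
      exact integral_period (n+k)
    rw [← intervalIntegral.integral_add_adjacent_intervals
      (hstep_intInt _ (-2*((n+k : ℕ):ℝ))) (hstep_intInt _ _), key, ih, add_zero]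

lemma integral_even' {n m : ℕ} (h : n ≤ m) :
    ∫ t in (-2*((m : ℕ):ℝ))..(-2*(n:ℝ)), hstep t = 0 := by
  obtain ⟨k, rfl⟩ := Nat.exists_eq_add_of_le h
  exact integral_even n k

noncomputable def Fimp (x : ℝ) : ℝ :=
  ∫ t in (-2*((⌊-x/2⌋₊ + 1 : ℕ):ℝ))..x, hstep t

lemma even_le {x : ℝ} {M : ℕ} (hM : ⌊-x/2⌋₊ + 1 ≤ M) : -2*((M:ℕ):ℝ) ≤ x := by
  have h1 : -x/2 < (⌊-x/2⌋₊ : ℝ) + 1 := Nat.lt_floor_add_one _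
  have h3 : ((⌊-x/2⌋₊ + 1 : ℕ):ℝ) ≤ (M:ℝ) := by exact_mod_cast hM
  push_cast at h3
  linarith

lemma Fimp_eq (x : ℝ) {M : ℕ} (hM : ⌊-x/2⌋₊ + 1 ≤ M) :
    Fimp x = ∫ t in (-2*((M:ℕ):ℝ))..x, hstep t := by
  rw [Fimp, ← intervalIntegral.integral_add_adjacent_intervals
    (hstep_intInt (-2*((M:ℕ):ℝ)) (-2*((⌊-x/2⌋₊ + 1 : ℕ):ℝ))) (hstep_intInt _ x),
    integral_even' hM, zero_add]

lemma Fimp_sub (a b : ℝ) : Fimp b - Fimp a = ∫ t in a..b, hstep t := by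
  set M : ℕ := max (⌊-a/2⌋₊ + 1) (⌊-b/2⌋₊ + 1) with hMdef
  rw [Fimp_eq a (le_max_left _ _), Fimp_eq b (le_max_right _ _)]
  exact intervalIntegral.integral_interval_sub_left (hstep_intInt _ _) (hstep_intInt _ _)

lemma hstep_abs_eq (n : ℕ) {t : ℝ} (h1 : -2*(n:ℝ) - 2 < t) (h2 : t ≤ -2*(n:ℝ)) :
    |hstep t| = 1 / ((n:ℝ) + 1) := by
  rcases le_or_gt t (-2*(n:ℝ) - 1) with h | h
  · rw [hstep_eq_neg n h1 h, abs_neg, abs_of_nonneg (by positivity)]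
  · rw [hstep_eq_pos n h h2, abs_of_nonneg (by positivity)]

lemma abs_Fimp_le (x : ℝ) : |Fimp x| ≤ 2 := by
  rcases le_or_gt x 0 with hx | hx
  · set n : ℕ := ⌊-x/2⌋₊ with hn
    have hcast : ((n + 1 : ℕ) : ℝ) = (n:ℝ) + 1 := by push_cast; ring
    have hfl : (n:ℝ) ≤ -x/2 := Nat.floor_le (by linarith)
    have hfl2 : -x/2 < (n:ℝ) + 1 := Nat.lt_floor_add_one _
    have hb : ∀ t ∈ Set.uIoc (-2*((n+1:ℕ):ℝ)) x, ‖hstep t‖ ≤ 1 / ((n:ℝ)+1) := by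
      intro t ht
      rw [Set.uIoc_of_le (by rw [hcast]; linarith)] at ht
      rw [Real.norm_eq_abs, hstep_abs_eq n (by rw [hcast] at ht; linarith [ht.1]) (by linarith [ht.2])]
    have := intervalIntegral.norm_integral_le_of_norm_le_const hb
    rw [Fimp, ← hn]
    have h2 : |x - -2*((n+1:ℕ):ℝ)| ≤ 2 := by
      rw [hcast, abs_of_nonneg (by linarith)]; linarith
    have h3 : (1:ℝ) / ((n:ℝ)+1) ≤ 1 := by
      rw [div_le_one (by positivity)]; linarith [Nat.cast_nonneg (α := ℝ) n]
    calc |Fimp x| ≤ 1/((n:ℝ)+1) * |x - -2*((n+1:ℕ):ℝ)| := by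
            simpa [Real.norm_eq_abs, Fimp, ← hn] using this
      _ ≤ 1 * 2 := by
            apply mul_le_mul h3 h2 (abs_nonneg _) zero_le_one
      _ = 2 := by ring
  · have hn : ⌊-x/2⌋₊ = 0 := by
      apply Nat.floor_eq_zero.mpr; nlinarith
    have hx0 : ∫ t in (0:ℝ)..x, hstep t = 0 := by
      rw [intervalIntegral.integral_of_le hx.le,
        setIntegral_congr_fun measurableSet_Ioc
          (fun t ht => show hstep t = 0 by rw [hstep, if_pos ht.1])]
      simp
    have hsplit : Fimp x = ∫ t in (-2*((1:ℕ):ℝ))..(0:ℝ), hstep t := by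
      rw [Fimp, hn, ← intervalIntegral.integral_add_adjacent_intervals
        (hstep_intInt (-2*((0+1:ℕ):ℝ)) 0) (hstep_intInt 0 x), hx0, add_zero]
      try norm_num
    rw [hsplit]
    have hb : ∀ t ∈ Set.uIoc (-2*((1:ℕ):ℝ)) (0:ℝ), ‖hstep t‖ ≤ 1 :=
      fun t _ => by rw [Real.norm_eq_abs]; exact abs_hstep_le t
    have := intervalIntegral.norm_integral_le_of_norm_le_const hb
    rw [Real.norm_eq_abs] at this
    calc |∫ t in (-2*((1:ℕ):ℝ))..(0:ℝ), hstep t| ≤ 1 * |0 - -2*((1:ℕ):ℝ)| := this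
      _ = 2 := by norm_num

lemma Fimp_lipschitz : LipschitzWith 1 Fimp := by
  apply LipschitzWith.of_dist_le_mul
  intro a b
  rw [Real.dist_eq, Real.dist_eq, Fimp_sub b a]
  have hb : ∀ t ∈ Set.uIoc b a, ‖hstep t‖ ≤ 1 :=
    fun t _ => by rw [Real.norm_eq_abs]; exact abs_hstep_le t
  have := intervalIntegral.norm_integral_le_of_norm_le_const hb
  rw [Real.norm_eq_abs] at this
  simpa using this

lemma tendsto_Fimp (x : ℝ) :
    Tendsto (fun a : ℝ => ∫ t in a..x, hstep t) atBot (𝓝 (Fimp x)) := by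
  set N : ℕ := ⌊-x/2⌋₊ + 1 with hN
  set c : ℝ := -2*((N:ℕ):ℝ) with hc
  have hcx : c ≤ x := even_le le_rfl
  have hc0 : c ≤ -2 := by
    rw [hc]
    have : (1:ℝ) ≤ (N:ℝ) := by exact_mod_cast Nat.one_le_iff_ne_zero.mpr (by omega)
    linarith
  have key : Tendsto (fun a : ℝ => ∫ t in a..c, hstep t) atBot (𝓝 0) := by
    rw [tendsto_zero_iff_norm_tendsto_zero]
    have hg : Tendsto (fun a : ℝ => 2/((⌊-a/2⌋₊:ℝ)+1)) atBot (𝓝 0) := by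
      have h1 : Tendsto (fun a : ℝ => -a/2) atBot atTop :=
        Tendsto.atTop_div_const two_pos tendsto_neg_atBot_atTop
      have h2 : Tendsto (fun a : ℝ => ⌊-a/2⌋₊) atBot atTop :=
        tendsto_nat_floor_atTop.comp h1
      have h3 : Tendsto (fun n : ℕ => 2/((n:ℝ)+1)) atTop (𝓝 0) := by
        have := tendsto_one_div_add_atTop_nhds_zero_nat.const_mul (2:ℝ)
        simpa [div_eq_mul_inv, one_div] using this
      exact h3.comp h2
    apply squeeze_zero' (Eventually.of_forall fun a => norm_nonneg _) ?_ hg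
    filter_upwards [eventually_le_atBot c] with a ha
    set m : ℕ := ⌊-a/2⌋₊ with hm
    have ha0 : a ≤ 0 := by linarith
    have hfl1 : (m:ℝ) ≤ -a/2 := Nat.floor_le (by linarith)
    have hfl2 : -a/2 < (m:ℝ) + 1 := Nat.lt_floor_add_one _
    have ham : a ≤ -2*(m:ℝ) := by linarith
    have ham2 : -2*(m:ℝ) - 2 < a := by linarith
    have hmN : N ≤ m := Nat.le_floor (by
      rw [hc] at ha
      linarith)
    have hsplit : ∫ t in a..c, hstep t = ∫ t in a..(-2*((m:ℕ):ℝ)), hstep t := by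
      rw [← intervalIntegral.integral_add_adjacent_intervals
        (hstep_intInt a (-2*((m:ℕ):ℝ))) (hstep_intInt _ c), hc, integral_even' hmN, add_zero]
    have hb : ∀ t ∈ Set.uIoc a (-2*((m:ℕ):ℝ)), ‖hstep t‖ ≤ 1/((m:ℝ)+1) := by
      intro t ht
      rw [Set.uIoc_of_le ham] at ht
      rw [Real.norm_eq_abs, hstep_abs_eq m (by linarith [ht.1]) ht.2]
    have hnorm := intervalIntegral.norm_integral_le_of_norm_le_const hb
    rw [hsplit]
    calc ‖∫ t in a..(-2*((m:ℕ):ℝ)), hstep t‖ ≤ 1/((m:ℝ)+1) * |(-2*((m:ℕ):ℝ)) - a| := hnorm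
      _ ≤ 1/((m:ℝ)+1) * 2 := by
          apply mul_le_mul_of_nonneg_left _ (by positivity)
          rw [abs_of_nonneg (by linarith)]
          linarith
      _ = 2/((⌊-a/2⌋₊:ℝ)+1) := by rw [← hm]; ring
  have heq : ∀ᶠ a in atBot, (∫ t in a..c, hstep t) + Fimp x = ∫ t in a..x, hstep t := by
    filter_upwards [eventually_le_atBot c] with a ha
    rw [Fimp_eq x (le_rfl : ⌊-x/2⌋₊ + 1 ≤ N)]
    exact intervalIntegral.integral_add_adjacent_intervals (hstep_intInt a c) (hstep_intInt c x)
  have := key.add (tendsto_const_nhds (x := Fimp x) (f := atBot))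
  rw [zero_add] at this
  exact this.congr' heq

lemma example_no_L1_representation_aux :
    ∃ F : ℝ → ℝ,
      (∀ x : ℝ, Tendsto (fun a : ℝ => ∫ t in a..x, hstep t) atBot (𝓝 (F x))) ∧
      (∃ C : ℝ, ∀ x : ℝ, |F x| ≤ C) ∧
      (∃ K : NNReal, LipschitzWith K F) ∧
      ¬ ∃ f : ℝ → ℝ, Integrable f ∧ ∀ x : ℝ, F x = ∫ t in Set.Iic x, f t := by
  refine ⟨Fimp, tendsto_Fimp, ⟨2, abs_Fimp_le⟩, ⟨1, Fimp_lipschitz⟩, ?_⟩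
  rintro ⟨f, hf, hrep⟩
  have key : ∀ n : ℕ, ∫ t in Set.Ioc (-2*(n:ℝ)-1) (-2*(n:ℝ)), f t = 1/((n:ℝ)+1) := by
    intro n
    have hle : -2*(n:ℝ)-1 ≤ -2*(n:ℝ) := by linarith
    calc ∫ t in Set.Ioc (-2*(n:ℝ)-1) (-2*(n:ℝ)), f t
        = ∫ t in (-2*(n:ℝ)-1)..(-2*(n:ℝ)), f t := (intervalIntegral.integral_of_le hle).symm
      _ = (∫ t in Set.Iic (-2*(n:ℝ)), f t) - ∫ t in Set.Iic (-2*(n:ℝ)-1), f t :=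
          (intervalIntegral.integral_Iic_sub_Iic hf.integrableOn hf.integrableOn).symm
      _ = Fimp (-2*(n:ℝ)) - Fimp (-2*(n:ℝ)-1) := by rw [← hrep, ← hrep]
      _ = ∫ t in (-2*(n:ℝ)-1)..(-2*(n:ℝ)), hstep t := Fimp_sub _ _
      _ = 1/((n:ℝ)+1) := integral_pos_piece n
  have hdisj : ∀ s : Set ℕ, s.Pairwise
      (Function.onFun Disjoint fun n : ℕ => Set.Ioc (-2*(n:ℝ)-1) (-2*(n:ℝ))) := by
    intro s m _ n _ hmn
    apply Set.Ioc_disjoint_Ioc.mpr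
    rcases lt_or_gt_of_ne hmn with h | h
    · have hc : (m:ℝ) + 1 ≤ (n:ℝ) := by exact_mod_cast h
      calc min (-2*(m:ℝ)) (-2*(n:ℝ)) ≤ -2*(n:ℝ) := min_le_right _ _
        _ ≤ -2*(m:ℝ)-1 := by linarith
        _ ≤ max (-2*(m:ℝ)-1) (-2*(n:ℝ)-1) := le_max_left _ _
    · have hc : (n:ℝ) + 1 ≤ (m:ℝ) := by exact_mod_cast h
      calc min (-2*(m:ℝ)) (-2*(n:ℝ)) ≤ -2*(m:ℝ) := min_le_left _ _
        _ ≤ -2*(n:ℝ)-1 := by linarith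
        _ ≤ max (-2*(m:ℝ)-1) (-2*(n:ℝ)-1) := le_max_right _ _
  have hsum : ∀ N : ℕ, ∑ n ∈ Finset.range N, (1/((n:ℝ)+1)) ≤ ∫ t, |f t| := by
    intro N
    calc ∑ n ∈ Finset.range N, (1/((n:ℝ)+1))
        = ∑ n ∈ Finset.range N, ∫ t in Set.Ioc (-2*(n:ℝ)-1) (-2*(n:ℝ)), f t :=
          Finset.sum_congr rfl (fun n _ => (key n).symm)
      _ = ∫ t in ⋃ n ∈ Finset.range N, Set.Ioc (-2*(n:ℝ)-1) (-2*(n:ℝ)), f t :=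
          (integral_biUnion_finset (Finset.range N) (fun n _ => measurableSet_Ioc)
            (hdisj _) (fun n _ => hf.integrableOn)).symm
      _ ≤ |∫ t in ⋃ n ∈ Finset.range N, Set.Ioc (-2*(n:ℝ)-1) (-2*(n:ℝ)), f t| := le_abs_self _
      _ ≤ ∫ t in ⋃ n ∈ Finset.range N, Set.Ioc (-2*(n:ℝ)-1) (-2*(n:ℝ)), |f t| := by
          simpa [Real.norm_eq_abs] using
            norm_integral_le_integral_norm
              (μ := volume.restrict (⋃ n ∈ Finset.range N, Set.Ioc (-2*(n:ℝ)-1) (-2*(n:ℝ)))) f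
      _ ≤ ∫ t, |f t| :=
          setIntegral_le_integral hf.abs (Eventually.of_forall fun t => abs_nonneg _)
  obtain ⟨N, hN⟩ :=
    (Real.tendsto_sum_range_one_div_nat_succ_atTop.eventually_gt_atTop (∫ t, |f t|)).exists
  exact absurd (hsum N) (not_le.mpr hN)

/-- **Example 3.4.** The function `F(x) = ∫_{-∞}^x h(t) dt`, defined
as an improper Riemann integral (i.e. `F(x) = lim_{a→-∞} ∫_a^x h(t) dt`), is a
bounded Lipschitz function `F : ℝ → ℝ` for which there is no `f ∈ L¹(ℝ)` with
`F(x) = ∫_{-∞}^x f(t) dt` (Lebesgue) for every `x ∈ ℝ`. -/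
theorem example_no_L1_representation :
    ∃ F : ℝ → ℝ,
      (∀ x : ℝ, Tendsto (fun a : ℝ => ∫ t in a..x, hstep t) atBot (𝓝 (F x))) ∧
      (∃ C : ℝ, ∀ x : ℝ, |F x| ≤ C) ∧
      (∃ K : NNReal, LipschitzWith K F) ∧
      ¬ ∃ f : ℝ → ℝ, Integrable f ∧ ∀ x : ℝ, F x = ∫ t in Set.Iic x, f t := by
  exact example_no_L1_representation_aux
end
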